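/- arXiv:1310.7652 — 7 statements merged into one kernel-verified Lean document; each statement's English description precedes it below -/
import Mathlib

section
/- Let k ≥ 2 and let H be a graph on vertex set [k] (loops allowed) that is disconnected or bipartite. Then for every integer t ≥ 1, every connected component of the Kronecker power H^{⊗t} has at most (k−1)^t + 1 vertices. -/
open Relation Set

private lemma my_ncard_univ_pi {t : ℕ} {α : Type*} [Fintype α] (C : Fin t → Set α) :
    (Set.pi Set.univ C).ncard = ∏ l, (C l).ncard := by
  rw [← Nat.card_coe_set_eq, Nat.card_congr (Equiv.Set.univPi C), Nat.card_pi]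
  simp [Nat.card_coe_set_eq]

private lemma my_arith (K : ℕ) (hK : 1 ≤ K) :
    ∀ t (a b : Fin (t + 1) → ℕ), (∀ l, 1 ≤ a l) → (∀ l, 1 ≤ b l) →
      (∀ l, a l + b l ≤ K + 1) →
      (∏ l, a l) + (∏ l, b l) ≤ K ^ (t + 1) + 1 := by
  intro t
  induction t with
  | zero =>
    intro a b ha hb hab
    simpa using hab 0
  | succ t ih =>
    intro a b ha hb hab
    rw [Fin.prod_univ_succ (f := a), Fin.prod_univ_succ (f := b)]
    set A := ∏ l : Fin (t + 1), a l.succ with hA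
    set B := ∏ l : Fin (t + 1), b l.succ with hB
    have hAB : A + B ≤ K ^ (t + 1) + 1 :=
      ih _ _ (fun l => ha _) (fun l => hb _) (fun l => hab _)
    have hA1 : 1 ≤ A := Finset.one_le_prod' fun l _ => ha _
    have hB1 : 1 ≤ B := Finset.one_le_prod' fun l _ => hb _
    have hAle : A ≤ K ^ (t + 1) := by
      calc A ≤ ∏ _l : Fin (t + 1), K :=
            Finset.prod_le_prod' fun l _ => by have := hab l.succ; have := hb l.succ; omega
        _ = K ^ (t + 1) := by simp
    have hBle : B ≤ K ^ (t + 1) := by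
      calc B ≤ ∏ _l : Fin (t + 1), K :=
            Finset.prod_le_prod' fun l _ => by have := hab l.succ; have := ha l.succ; omega
        _ = K ^ (t + 1) := by simp
    have h0 := hab 0; have ha0 := ha 0; have hb0 := hb 0
    have hpow : K ^ (t + 1 + 1) = K * K ^ (t + 1) := by ring
    rw [hpow]
    have ha0K : a 0 ≤ K := by omega
    have hb0K : b 0 ≤ K := by omega
    zify at *
    rcases le_total B A with hBA | hBA
    · have h1 : (0:ℤ) ≤ ((K:ℤ) + 1 - a 0 - b 0) * A := mul_nonneg (by linarith) (by linarith)
      have h2 : (0:ℤ) ≤ ((b 0 : ℤ) - 1) * (A - B) := mul_nonneg (by linarith) (by linarith)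
      have h3 : (0:ℤ) ≤ ((K:ℤ) - 1) * ((K:ℤ) ^ (t + 1) - A) := mul_nonneg (by linarith) (by linarith)
      nlinarith [h1, h2, h3]
    · have h1 : (0:ℤ) ≤ ((K:ℤ) + 1 - a 0 - b 0) * B := mul_nonneg (by linarith) (by linarith)
      have h2 : (0:ℤ) ≤ ((a 0 : ℤ) - 1) * (B - A) := mul_nonneg (by linarith) (by linarith)
      have h3 : (0:ℤ) ≤ ((K:ℤ) - 1) * ((K:ℤ) ^ (t + 1) - B) := mul_nonneg (by linarith) (by linarith)
      nlinarith [h1, h2, h3]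

/-- If `H` is a graph on `[k]` (loops allowed, modeled as a symmetric
relation `A`) that is disconnected or bipartite, then every connected component of the
`t`-fold Kronecker power `H^{⊗t}` has at most `(k-1)^t + 1` vertices.  In the Kronecker
power, `u` and `v` are adjacent iff `u l` is adjacent to `v l` in `H` for every
coordinate `l`; the component of `v` is its reachability class. -/
theorem stmt0 (k t : ℕ) (hk : 2 ≤ k) (ht : 1 ≤ t)
    (A : Fin k → Fin k → Prop) (hsymm : ∀ i j, A i j → A j i)
    (hDB : (¬ ∀ i j : Fin k, Relation.ReflTransGen A i j) ∨
      ∃ f : Fin k → Bool, ∀ i j : Fin k, A i j → f i ≠ f j) :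
    ∀ v : Fin t → Fin k,
      Set.ncard {u : Fin t → Fin k |
          Relation.ReflTransGen (fun x y : Fin t → Fin k => ∀ l, A (x l) (y l)) v u}
        ≤ (k - 1) ^ t + 1 := by
  intro v
  set Rel : (Fin t → Fin k) → (Fin t → Fin k) → Prop :=
    fun x y => ∀ l, A (x l) (y l) with hRelDef
  set S : Set (Fin t → Fin k) := {u | Relation.ReflTransGen Rel v u} with hSdef
  have hkuniv : (Set.univ : Set (Fin k)).ncard = k := by
    rw [Set.ncard_univ]; simp
  rcases hDB with hD | ⟨f, hf⟩
  · -- disconnected case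
    push_neg at hD
    obtain ⟨i, j, hij⟩ := hD
    have coord : ∀ u ∈ S, ∀ l, Relation.ReflTransGen A (v l) (u l) := by
      intro u hu
      induction hu with
      | refl => intro l; exact .refl
      | tail _ h ih => intro l; exact (ih l).tail (h l)
    have comp_le : ∀ c : Fin k, {x | Relation.ReflTransGen A c x}.ncard ≤ k - 1 := by
      intro c
      set C : Set (Fin k) := {x | Relation.ReflTransGen A c x} with hC
      have hnotboth : i ∉ C ∨ j ∉ C := by
        by_contra h
        push_neg at h
        obtain ⟨hi, hj⟩ := h
        exact hij ((@Std.Symm.symm _ _ (@Relation.ReflTransGen.stdSymm _ _ ⟨hsymm⟩) _ _ hi).trans hj)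
      have hssub : C ⊂ Set.univ := by
        refine ⟨Set.subset_univ _, fun h => ?_⟩
        rcases hnotboth with h' | h' <;> exact h' (h (Set.mem_univ _))
      have := Set.ncard_lt_ncard hssub (Set.finite_univ)
      omega
    have hsub : S ⊆ Set.pi Set.univ (fun l => {x | Relation.ReflTransGen A (v l) x}) := by
      intro u hu l _
      exact coord u hu l
    calc S.ncard ≤ (Set.pi Set.univ (fun l => {x | Relation.ReflTransGen A (v l) x})).ncard :=
          Set.ncard_le_ncard hsub (Set.toFinite _)
      _ = ∏ l, {x | Relation.ReflTransGen A (v l) x}.ncard := my_ncard_univ_pi _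
      _ ≤ ∏ _l : Fin t, (k - 1) := Finset.prod_le_prod' fun l _ => comp_le _
      _ = (k - 1) ^ t := by simp
      _ ≤ (k - 1) ^ t + 1 := Nat.le_succ _
  · -- bipartite case
    set R2 : Fin k → Fin k → Prop := fun i j => ∃ m, A i m ∧ A m j with hR2
    set E : Fin t → Set (Fin k) := fun l => {c | Relation.ReflTransGen R2 (v l) c} with hE
    set O : Fin t → Set (Fin k) :=
      fun l => {c | ∃ m, Relation.ReflTransGen R2 (v l) m ∧ A m c} with hO
    have key : ∀ u ∈ S, (∀ l, u l ∈ E l) ∨ (∀ l, u l ∈ O l) := by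
      intro u hu
      induction hu with
      | refl => left; intro l; exact Relation.ReflTransGen.refl
      | tail _ h ih =>
        rcases ih with hEv | hOd
        · right; intro l; exact ⟨_, hEv l, h l⟩
        · left; intro l
          obtain ⟨m, hm, hmA⟩ := hOd l
          exact hm.tail ⟨_, hmA, h l⟩
    by_cases hiso : ∀ l, (O l).Nonempty
    · -- every coordinate has odd-reachable vertices
      have hEcol : ∀ l, ∀ c ∈ E l, f c = f (v l) := by
        intro l c hc
        induction hc with
        | refl => rfl
        | @tail p q hvp hpq ih =>
          obtain ⟨m, h1, h2⟩ := hpq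
          have e1 := hf _ _ h1
          have e2 := hf _ _ h2
          rw [← ih]
          cases hm : f m <;> cases hp : f p <;> cases hq : f q <;> simp_all
      have hOcol : ∀ l, ∀ c ∈ O l, f c ≠ f (v l) := by
        rintro l c ⟨m, hm, hmA⟩
        rw [← hEcol l m hm]
        exact fun h => hf _ _ hmA h.symm
      have hdisj : ∀ l, Disjoint (E l) (O l) := by
        intro l
        rw [Set.disjoint_iff_inter_eq_empty]
        ext c
        simp only [Set.mem_inter_iff, Set.mem_empty_iff_false, iff_false, not_and]
        intro hc hc'
        exact hOcol l c hc' (hEcol l c hc)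
      have hab : ∀ l, (E l).ncard + (O l).ncard ≤ k := by
        intro l
        rw [← Set.ncard_union_eq (hdisj l) (Set.toFinite _) (Set.toFinite _)]
        calc ((E l) ∪ (O l)).ncard ≤ (Set.univ : Set (Fin k)).ncard :=
              Set.ncard_le_ncard (Set.subset_univ _) Set.finite_univ
          _ = k := hkuniv
      have ha1 : ∀ l, 1 ≤ (E l).ncard := fun l =>
        (Set.ncard_pos (Set.toFinite _)).mpr ⟨v l, Relation.ReflTransGen.refl⟩
      have hb1 : ∀ l, 1 ≤ (O l).ncard := fun l =>
        (Set.ncard_pos (Set.toFinite _)).mpr (hiso l)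
      have hsub : S ⊆ Set.pi Set.univ E ∪ Set.pi Set.univ O := by
        intro u hu
        rcases key u hu with h | h
        · exact Or.inl fun l _ => h l
        · exact Or.inr fun l _ => h l
      obtain ⟨s, rfl⟩ : ∃ s, t = s + 1 := ⟨t - 1, by omega⟩
      calc S.ncard ≤ (Set.pi Set.univ E ∪ Set.pi Set.univ O).ncard :=
            Set.ncard_le_ncard hsub (Set.toFinite _)
        _ ≤ (Set.pi Set.univ E).ncard + (Set.pi Set.univ O).ncard := Set.ncard_union_le _ _
        _ = (∏ l, (E l).ncard) + (∏ l, (O l).ncard) := by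
            rw [my_ncard_univ_pi, my_ncard_univ_pi]
        _ ≤ (k - 1) ^ (s + 1) + 1 := by
            have := my_arith (k - 1) (by omega) s (fun l => (E l).ncard)
              (fun l => (O l).ncard) ha1 hb1
              (fun l => by show (E l).ncard + (O l).ncard ≤ (k - 1) + 1
                           have := hab l; omega)
            exact this
    · -- some coordinate is isolated: component is just {v}
      push_neg at hiso
      obtain ⟨l0, hl0⟩ := hiso
      have hsub : S ⊆ {v} := by
        intro u hu
        rcases (Relation.ReflTransGen.cases_head hu) with rfl | ⟨w, hw, _⟩
        · rfl
        · exfalso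
          have : w l0 ∈ O l0 := ⟨v l0, Relation.ReflTransGen.refl, hw l0⟩
          rw [hl0] at this
          exact this
      calc S.ncard ≤ ({v} : Set (Fin t → Fin k)).ncard :=
            Set.ncard_le_ncard hsub (Set.toFinite _)
        _ = 1 := Set.ncard_singleton _
        _ ≤ (k - 1) ^ t + 1 := by omega
end

section
/- Let k ≥ 2 and let P ∈ [0,1]^{k×k} be symmetric, and suppose that the graph on [k] with an edge {i,j} whenever P_{ij} > 0 is disconnected or bipartite. Then for every t ≥ 1 and every graph G on vertex set [k]^t in which every edge {u,v} satisfies P^{⊗t}_{uv} > 0, every connected component of G has at most (k−1)^t + 1 vertices. In particular, the largest component of the t-th order stochastic Kronecker graph generated by P surely has size at most (k−1)^t + 1 = o(k^t). -/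
open Finset MeasureTheory
open scoped Classical ENNReal

noncomputable section

namespace SKG

/-- The `j`-th column sum of `P`. -/
def colSum {k : ℕ} (P : Matrix (Fin k) (Fin k) ℝ) (j : Fin k) : ℝ := ∑ i, P i j

/-- The weighted graph `W(P)` is connected: any two vertices are joined by a
walk along pairs with positive weight. -/
def connectedW {k : ℕ} (P : Matrix (Fin k) (Fin k) ℝ) : Prop :=
  ∀ i j : Fin k, Relation.ReflTransGen (fun a b => 0 < P a b) i j

/-- The weighted graph `W(P)` is non-bipartite: there is no proper two-coloring
of the graph with an edge wherever `P i j > 0`. -/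
def nonBipartiteW {k : ℕ} (P : Matrix (Fin k) (Fin k) ℝ) : Prop :=
  ¬ ∃ f : Fin k → Bool, ∀ i j : Fin k, 0 < P i j → f i ≠ f j

/-- The signature of a vertex `v ∈ [k]^t`: the proportion of coordinates equal to each symbol. -/
def sig {k : ℕ} (t : ℕ) (v : Fin t → Fin k) : Fin k → ℝ :=
  fun i => ((Finset.univ.filter fun l => v l = i).card : ℝ) / t

/-- The transition matrix `M = C⁻¹ P` of the uniform random walk on `W`. -/
def MW {k : ℕ} (P : Matrix (Fin k) (Fin k) ℝ) : Matrix (Fin k) (Fin k) ℝ :=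
  Matrix.of fun i j => P i j / colSum P i

/-- The Kronecker-power edge probability `P^{⊗t}_{uv} = ∏ l P_{u_l v_l}`. -/
def pk {k : ℕ} (P : Matrix (Fin k) (Fin k) ℝ) (t : ℕ) (u v : Fin t → Fin k) : ℝ :=
  ∏ l, P (u l) (v l)

/-- The volume of `W`: the sum of all column sums. -/
def volW {k : ℕ} (P : Matrix (Fin k) (Fin k) ℝ) : ℝ := ∑ j, colSum P j

/-- The vector `L = (ln c₁, …, ln c_k)`. -/
def LW {k : ℕ} (P : Matrix (Fin k) (Fin k) ℝ) : Fin k → ℝ :=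
  fun i => Real.log (colSum P i)

/-- Standard inner product on `ℝ^k`. -/
def ip {k : ℕ} (x y : Fin k → ℝ) : ℝ := ∑ i, x i * y i

/-- The set `S_ε` of vertices with signature close to the stationary distribution. -/
def Sset {k : ℕ} (P : Matrix (Fin k) (Fin k) ℝ) (ε : ℝ) (t : ℕ) : Set (Fin t → Fin k) :=
  {v | ∀ i : Fin k, (1 - ε) * (colSum P i / volW P) < sig t v i}

/-- The set `Σ_ν` of vertices whose signature stays above `ν` against `L` under the Markov chain. -/
def SigmaSet {k : ℕ} (P : Matrix (Fin k) (Fin k) ℝ) (ν : ℝ) (t : ℕ) : Set (Fin t → Fin k) :=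
  {v | ∀ s : ℕ, ν ≤ ip (Matrix.vecMul (sig t v) ((MW P) ^ s)) (LW P)}

/-- Bernoulli-type measure on `Bool` with success probability `p`. -/
def bern (p : ℝ) : Measure Bool :=
  ENNReal.ofReal p • Measure.dirac true + ENNReal.ofReal (1 - p) • Measure.dirac false

instance bern.isFiniteMeasure (p : ℝ) : IsFiniteMeasure (bern p) := by
  constructor
  have : bern p Set.univ = ENNReal.ofReal p * Measure.dirac true Set.univ
      + ENNReal.ofReal (1 - p) * Measure.dirac false Set.univ := by
    simp [bern]
  rw [this]
  simp only [measure_univ, mul_one]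
  exact ENNReal.add_lt_top.mpr ⟨ENNReal.ofReal_lt_top, ENNReal.ofReal_lt_top⟩

/-- The edge probability, as a symmetric function on unordered pairs of vertices.
When `P` is symmetric this equals `P^{⊗t}_{uv}`. -/
def symProb {k : ℕ} (P : Matrix (Fin k) (Fin k) ℝ) (t : ℕ) : Sym2 (Fin t → Fin k) → ℝ :=
  Sym2.lift ⟨fun u v => ∏ l, (P (u l) (v l) + P (v l) (u l)) / 2,
    fun u v => Finset.prod_congr rfl fun l _ => by ring⟩

/-- The law of the `t`-th order stochastic Kronecker graph generated by `P`:
each unordered pair of vertices gets an independent Bernoulli(`P^{⊗t}_{uv}`) indicator. -/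
def skg {k : ℕ} (P : Matrix (Fin k) (Fin k) ℝ) (t : ℕ) :
    Measure (Sym2 (Fin t → Fin k) → Bool) :=
  Measure.pi fun e => bern (symProb P t e)

/-- The simple graph determined by a sample point `ω` of edge indicators. -/
def graphOf {k t : ℕ} (ω : Sym2 (Fin t → Fin k) → Bool) :
    SimpleGraph (Fin t → Fin k) where
  Adj u v := u ≠ v ∧ ω s(u, v) = true
  symm := ⟨fun u v h => ⟨h.1.symm, by rw [Sym2.eq_swap]; exact h.2⟩⟩
  loopless := ⟨fun u h => h.1 rfl⟩

end SKG

lemma arith1 (p q r s : ℕ) (hpq : p ≤ q) (hrs : r ≤ s) :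
    p * s + q * r ≤ p * r + q * s := by
  obtain ⟨d, rfl⟩ := Nat.exists_eq_add_of_le hpq
  obtain ⟨e, rfl⟩ := Nat.exists_eq_add_of_le hrs
  nlinarith [Nat.zero_le (d * e)]

lemma arith2 (a b j m : ℕ) (hab : a ≤ b) :
    a ^ j * b ^ m + a ^ m * b ^ j ≤ a ^ (j + m) + b ^ (j + m) := by
  have h1 : a ^ j ≤ b ^ j := Nat.pow_le_pow_left hab j
  have h2 : a ^ m ≤ b ^ m := Nat.pow_le_pow_left hab m
  have := arith1 (a ^ j) (b ^ j) (a ^ m) (b ^ m) h1 h2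
  simpa [pow_add, mul_comm] using this

lemma arith3 (a c t : ℕ) (ha : 1 ≤ a) (ht : 1 ≤ t) :
    a ^ t + (c + 1) ^ t ≤ (a + c) ^ t + 1 := by
  obtain ⟨a', rfl⟩ := Nat.exists_eq_add_of_le ha
  induction t with
  | zero => omega
  | succ t IH =>
    rcases Nat.eq_or_lt_of_le ht with h | h
    · simp [← h]; omega
    · have ht' : 1 ≤ t := by omega
      have IH' := IH ht'
      have hA : 1 ≤ (1 + a') ^ t := Nat.one_le_pow _ _ (by omega)
      have hC : 1 ≤ (c + 1) ^ t := Nat.one_le_pow _ _ (by omega)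
      have key := Nat.mul_le_mul_left (1 + a' + c) IH'
      rw [pow_succ, pow_succ, pow_succ]
      nlinarith [Nat.mul_le_mul_left c hA, Nat.mul_le_mul_left a' hC]

lemma arith4 (a b t j : ℕ) (ha : 1 ≤ a) (hb : 1 ≤ b) (ht : 1 ≤ t) (hj : j ≤ t) :
    a ^ j * b ^ (t - j) + a ^ (t - j) * b ^ j ≤ (a + b - 1) ^ t + 1 := by
  obtain ⟨m, rfl⟩ : ∃ m, t = j + m := ⟨t - j, by omega⟩
  have hjm : j + m - j = m := by omega
  rw [hjm]
  have step1 : a ^ j * b ^ m + a ^ m * b ^ j ≤ a ^ (j + m) + b ^ (j + m) := by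
    rcases le_total a b with h | h
    · exact arith2 a b j m h
    · have := arith2 b a j m h
      linarith [this]
  refine step1.trans ?_
  obtain ⟨c, rfl⟩ := Nat.exists_eq_add_of_le hb
  have : a + (1 + c) - 1 = a + c := by omega
  rw [this]
  have := arith3 a c (j + m) ha ht
  simpa [add_comm] using this

lemma prod_fiber {t : ℕ} (n : Bool → ℕ) (x : Fin t → Bool) :
    ∏ l, n (x l) =
      n true ^ (Finset.univ.filter fun l => x l = true).card *
      n false ^ (t - (Finset.univ.filter fun l => x l = true).card) := by
  have h := Finset.prod_filter_mul_prod_filter_not Finset.univ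
    (fun l => x l = true) (fun l => n (x l))
  have h1 : ∏ l ∈ Finset.univ.filter (fun l => x l = true), n (x l)
      = n true ^ (Finset.univ.filter fun l => x l = true).card := by
    rw [← Finset.prod_const]
    exact Finset.prod_congr rfl fun l hl => by
      rw [Finset.mem_filter] at hl; exact congrArg n hl.2
  have h2 : ∏ l ∈ Finset.univ.filter (fun l => ¬ x l = true), n (x l)
      = n false ^ (t - (Finset.univ.filter fun l => x l = true).card) := by
    have hc : (Finset.univ.filter (fun l => ¬ x l = true)).card
        = t - (Finset.univ.filter fun l => x l = true).card := by
      have := Finset.card_filter_add_card_filter_not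
        (s := (Finset.univ : Finset (Fin t))) (p := fun l => x l = true)
      simp only [Finset.card_univ, Fintype.card_fin] at this
      omega
    rw [← hc, ← Finset.prod_const]
    exact Finset.prod_congr rfl fun l hl => by
      rw [Finset.mem_filter] at hl
      exact congrArg n (by simpa using hl.2)
  rw [← h, h1, h2]

section Comb

variable {k t : ℕ}

lemma card_fiber (f : Fin k → Bool) (x : Fin t → Bool) :
    Set.ncard {u : Fin t → Fin k | ∀ l, f (u l) = x l} =
      ∏ l, (Finset.univ.filter fun i => f i = x l).card := by
  rw [← Nat.card_coe_set_eq, Nat.card_eq_fintype_card]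
  have e : {u : Fin t → Fin k | ∀ l, f (u l) = x l} ≃ ∀ l, {i : Fin k // f i = x l} :=
    { toFun := fun u l => ⟨u.1 l, u.2 l⟩
      invFun := fun g => ⟨fun l => (g l).1, fun l => (g l).2⟩
      left_inv := fun _ => rfl
      right_inv := fun _ => rfl }
  rw [Fintype.card_congr e, Fintype.card_pi]
  exact Finset.prod_congr rfl fun l _ => Fintype.card_subtype _

lemma fiber_sum (f : Fin k → Bool) :
    (Finset.univ.filter fun i => f i = true).card
      + (Finset.univ.filter fun i => f i = false).card = k := by
  have h := Finset.card_filter_add_card_filter_not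
    (s := (Finset.univ : Finset (Fin k))) (p := fun i => f i = true)
  simp only [Finset.card_univ, Fintype.card_fin] at h
  have h2 : (Finset.univ.filter fun i => ¬ f i = true).card
      = (Finset.univ.filter fun i => f i = false).card := by
    apply Finset.card_bij (fun i _ => i) <;> intros <;>
      simp_all [Bool.not_eq_true] <;> aesop
  omega

-- invariance along reachability, "equal" version
lemma reach_inv_eq (G : SimpleGraph (Fin t → Fin k)) (f : Fin k → Bool)
    (hstep : ∀ u w, G.Adj u w → ∀ l, f (u l) = f (w l)) (v u : Fin t → Fin k)
    (h : G.Reachable v u) : ∀ l, f (u l) = f (v l) := by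
  rw [SimpleGraph.reachable_iff_reflTransGen] at h
  induction h with
  | refl => exact fun l => rfl
  | tail _ hbc IH => exact fun l => (hstep _ _ hbc l).symm.trans (IH l)

lemma reach_inv_ne (G : SimpleGraph (Fin t → Fin k)) (f : Fin k → Bool)
    (hstep : ∀ u w, G.Adj u w → ∀ l, f (u l) ≠ f (w l)) (v u : Fin t → Fin k)
    (h : G.Reachable v u) :
    (∀ l, f (u l) = f (v l)) ∨ (∀ l, f (u l) = ! f (v l)) := by
  rw [SimpleGraph.reachable_iff_reflTransGen] at h
  induction h with
  | refl => exact Or.inl fun l => rfl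
  | @tail b c hb hbc IH =>
    rcases IH with IH | IH
    · refine Or.inr fun l => ?_
      have h1 := hstep _ _ hbc l
      rw [IH l] at h1
      revert h1; cases f (v l) <;> cases f (c l) <;> simp_all
    · refine Or.inl fun l => ?_
      have h1 := hstep _ _ hbc l
      rw [IH l] at h1
      revert h1; cases f (v l) <;> cases f (c l) <;> simp_all

end Comb

namespace SKGaux

open SKG

lemma pk_pos_coord {k t : ℕ} {P : Matrix (Fin k) (Fin k) ℝ}
    (h01 : ∀ i j, P i j ∈ Set.Icc (0 : ℝ) 1) {u v : Fin t → Fin k}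
    (h : 0 < pk P t u v) (l : Fin t) : 0 < P (u l) (v l) := by
  rcases lt_or_eq_of_le (h01 (u l) (v l)).1 with h' | h'
  · exact h'
  · exfalso
    have : pk P t u v = 0 := Finset.prod_eq_zero (Finset.mem_univ l) h'.symm
    rw [this] at h; exact lt_irrefl 0 h

lemma partA {k t : ℕ} (hk : 2 ≤ k) (ht : 1 ≤ t)
    (P : Matrix (Fin k) (Fin k) ℝ) (hsymm : P.IsSymm)
    (h01 : ∀ i j, P i j ∈ Set.Icc (0 : ℝ) 1)
    (hDB : (¬ ∀ i j : Fin k, Relation.ReflTransGen (fun a b => 0 < P a b) i j) ∨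
      ∃ f : Fin k → Bool, ∀ i j : Fin k, 0 < P i j → f i ≠ f j)
    (G : SimpleGraph (Fin t → Fin k))
    (hG : ∀ u v : Fin t → Fin k, G.Adj u v → 0 < pk P t u v)
    (v : Fin t → Fin k) :
    Set.ncard {u : Fin t → Fin k | G.Reachable v u} ≤ (k - 1) ^ t + 1 := by
  have hstepco : ∀ u w, G.Adj u w → ∀ l, 0 < P (u l) (w l) :=
    fun u w h l => pk_pos_coord h01 (hG u w h) l
  rcases hDB with hdisc | ⟨f, hf⟩
  · -- disconnected case
    push_neg at hdisc
    obtain ⟨i, j, hij⟩ := hdisc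
    set R := fun a b : Fin k => 0 < P a b with hR
    set f : Fin k → Bool := fun a => if Relation.ReflTransGen R i a then true else false with hfdef
    have hf : ∀ a b, 0 < P a b → f a = f b := by
      intro a b hab
      by_cases hra : Relation.ReflTransGen R i a
      · have hrb : Relation.ReflTransGen R i b := hra.tail hab
        simp [hfdef, hra, hrb]
      · have hrb : ¬ Relation.ReflTransGen R i b := by
          intro hrb
          refine hra (hrb.tail ?_)
          show 0 < P b a
          have hba := hsymm.apply a b
          rw [hba]; exact hab
        simp [hfdef, hra, hrb]
    have hfi : f i = true := by simp [hfdef, Relation.ReflTransGen.refl]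
    have hfj : f j = false := by simp [hfdef, hij]
    -- fibers
    set n : Bool → ℕ := fun b => (Finset.univ.filter fun i' => f i' = b).card with hn
    have hnt : 1 ≤ n true := Finset.card_pos.2 ⟨i, by simp [hfi]⟩
    have hnf : 1 ≤ n false := Finset.card_pos.2 ⟨j, by simp [hfj]⟩
    have hsum : n true + n false = k := fiber_sum f
    have hbd : ∀ b, n b ≤ k - 1 := by intro b; cases b <;> omega
    have hsub : {u : Fin t → Fin k | G.Reachable v u}
        ⊆ {u | ∀ l, f (u l) = f (v l)} := by
      intro u hu
      exact reach_inv_eq G f (fun a b hab l => hf _ _ (hstepco a b hab l)) v u hu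
    calc Set.ncard {u : Fin t → Fin k | G.Reachable v u}
        ≤ Set.ncard {u : Fin t → Fin k | ∀ l, f (u l) = f (v l)} :=
          Set.ncard_le_ncard hsub (Set.toFinite _)
      _ = ∏ l, n (f (v l)) := card_fiber f (fun l => f (v l))
      _ ≤ ∏ _l : Fin t, (k - 1) := Finset.prod_le_prod' fun l _ => hbd _
      _ = (k - 1) ^ t := by simp [Finset.prod_const]
      _ ≤ (k - 1) ^ t + 1 := Nat.le_succ _
  · -- bipartite case
    have hstep : ∀ u w, G.Adj u w → ∀ l, f (u l) ≠ f (w l) :=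
      fun u w h l => hf _ _ (hstepco u w h l)
    by_cases hconst : ∀ a b : Fin k, f a = f b
    · -- no edges at all
      have hsub : {u : Fin t → Fin k | G.Reachable v u} ⊆ {v} := by
        intro u hu
        rw [Set.mem_setOf_eq, SimpleGraph.reachable_iff_reflTransGen] at hu
        induction hu with
        | refl => rfl
        | @tail b c hb hbc IH =>
          exact absurd (hconst (b ⟨0, ht⟩) (c ⟨0, ht⟩)) (hstep b c hbc ⟨0, ht⟩)
      calc Set.ncard {u : Fin t → Fin k | G.Reachable v u}
          ≤ Set.ncard {v} := Set.ncard_le_ncard hsub (Set.toFinite _)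
        _ = 1 := Set.ncard_singleton v
        _ ≤ (k - 1) ^ t + 1 := by omega
    · push_neg at hconst
      obtain ⟨i, j, hij⟩ := hconst
      set n : Bool → ℕ := fun b => (Finset.univ.filter fun i' => f i' = b).card with hn
      obtain ⟨p, hp, q, hq⟩ : ∃ p, f p = true ∧ ∃ q, f q = false := by
        cases hfi : f i <;> cases hfj : f j
        · simp_all
        · exact ⟨j, hfj, i, hfi⟩
        · exact ⟨i, hfi, j, hfj⟩
        · simp_all
      have hnt : 1 ≤ n true := Finset.card_pos.2 ⟨p, by simp [hp]⟩
      have hnf : 1 ≤ n false := Finset.card_pos.2 ⟨q, by simp [hq]⟩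
      have hsum : n true + n false = k := fiber_sum f
      set x : Fin t → Bool := fun l => f (v l) with hx
      have hsub : {u : Fin t → Fin k | G.Reachable v u}
          ⊆ {u | ∀ l, f (u l) = x l} ∪ {u | ∀ l, f (u l) = ! x l} := by
        intro u hu
        rcases reach_inv_ne G f hstep v u hu with h | h
        · exact Or.inl h
        · exact Or.inr h
      set j0 : ℕ := (Finset.univ.filter fun l => x l = true).card with hj0
      have hj0t : j0 ≤ t := by
        have := Finset.card_filter_le (Finset.univ : Finset (Fin t)) (fun l => x l = true)
        simpa using this
      have hcard1 : Set.ncard {u : Fin t → Fin k | ∀ l, f (u l) = x l}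
          = n true ^ j0 * n false ^ (t - j0) := by
        rw [card_fiber f x]
        exact prod_fiber n x
      have hfilter : (Finset.univ.filter fun l => (! x l) = true).card = t - j0 := by
        have h1 : (Finset.univ.filter fun l => (! x l) = true)
            = (Finset.univ.filter fun l => ¬ (x l = true)) := by
          apply Finset.filter_congr; intro l _; simp
        have h2 := Finset.card_filter_add_card_filter_not
          (s := (Finset.univ : Finset (Fin t))) (p := fun l => x l = true)
        simp only [Finset.card_univ, Fintype.card_fin] at h2
        rw [h1]
        exact Nat.eq_sub_of_add_eq' h2
      have hcard2 : Set.ncard {u : Fin t → Fin k | ∀ l, f (u l) = ! x l}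
          = n true ^ (t - j0) * n false ^ j0 := by
        rw [card_fiber f (fun l => ! x l)]
        have := prod_fiber n (fun l => ! x l)
        rw [hfilter] at this
        rw [this, Nat.sub_sub_self hj0t]
      calc Set.ncard {u : Fin t → Fin k | G.Reachable v u}
          ≤ Set.ncard ({u : Fin t → Fin k | ∀ l, f (u l) = x l}
              ∪ {u | ∀ l, f (u l) = ! x l}) :=
            Set.ncard_le_ncard hsub (Set.toFinite _)
        _ ≤ Set.ncard {u : Fin t → Fin k | ∀ l, f (u l) = x l}
              + Set.ncard {u : Fin t → Fin k | ∀ l, f (u l) = ! x l} :=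
            Set.ncard_union_le _ _
        _ = n true ^ j0 * n false ^ (t - j0) + n true ^ (t - j0) * n false ^ j0 := by
            rw [hcard1, hcard2]
        _ ≤ (n true + n false - 1) ^ t + 1 := arith4 _ _ t j0 hnt hnf ht hj0t
        _ = (k - 1) ^ t + 1 := by rw [hsum]




variable {k t : ℕ} {P : Matrix (Fin k) (Fin k) ℝ}

lemma symProb_eq (hsymm : P.IsSymm) (u v : Fin t → Fin k) :
    SKG.symProb P t s(u, v) = SKG.pk P t u v := by
  simp only [SKG.symProb, Sym2.lift_mk]
  refine Finset.prod_congr rfl fun l _ => ?_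
  rw [hsymm.apply (u l) (v l)]
  ring

lemma symProb_mem (h01 : ∀ i j, P i j ∈ Set.Icc (0 : ℝ) 1)
    (e : Sym2 (Fin t → Fin k)) : SKG.symProb P t e ∈ Set.Icc (0 : ℝ) 1 := by
  induction e using Sym2.ind with
  | _ u v =>
    simp only [SKG.symProb, Sym2.lift_mk]
    constructor
    · exact Finset.prod_nonneg fun l _ => by
        have h1 := (h01 (u l) (v l)).1
        have h2 := (h01 (v l) (u l)).1
        positivity
    · refine Finset.prod_le_one (fun l _ => by
        have h1 := (h01 (u l) (v l)).1
        have h2 := (h01 (v l) (u l)).1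
        positivity) (fun l _ => ?_)
      have h1 := (h01 (u l) (v l)).2
      have h2 := (h01 (v l) (u l)).2
      linarith

lemma bern_prob {p : ℝ} (h0 : 0 ≤ p) (h1 : p ≤ 1) :
    IsProbabilityMeasure (SKG.bern p) := by
  constructor
  rw [SKG.bern]
  simp only [Measure.add_apply, Measure.smul_apply, measure_univ, smul_eq_mul, mul_one]
  rw [← ENNReal.ofReal_add h0 (by linarith)]
  norm_num

lemma cyl_null (hsymm : P.IsSymm) (e : Sym2 (Fin t → Fin k))
    (he : SKG.symProb P t e = 0) :
    SKG.skg P t {ω | ω e = true} = 0 := by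
  have hset : {ω : Sym2 (Fin t → Fin k) → Bool | ω e = true}
      = Set.pi Set.univ (fun j => if j = e then {true} else Set.univ) := by
    ext ω
    simp only [Set.mem_setOf_eq, Set.mem_pi, Set.mem_univ, forall_true_left]
    constructor
    · intro h j
      by_cases hj : j = e
      · subst hj; simp [h]
      · simp [hj]
    · intro h
      have := h e
      simpa using this
  rw [SKG.skg, hset, Measure.pi_pi]
  refine Finset.prod_eq_zero (Finset.mem_univ e) ?_
  simp only [if_pos rfl]
  rw [he, SKG.bern]
  simp [Measure.dirac_apply]

lemma pk_nonneg (h01 : ∀ i j, P i j ∈ Set.Icc (0 : ℝ) 1) (u v : Fin t → Fin k) :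
    0 ≤ SKG.pk P t u v :=
  Finset.prod_nonneg fun l _ => (h01 (u l) (v l)).1

end SKGaux
/-- If `P ∈ [0,1]^{k×k}` is symmetric and the graph on `[k]` with an edge
wherever `P i j > 0` is disconnected or bipartite, then for every `t ≥ 1`: (a) every
graph `G` on `[k]^t` whose edges all have positive Kronecker probability has all its
components of size at most `(k-1)^t + 1`; and (b) almost surely (in fact with
probability one) the largest component of the `t`-th order stochastic Kronecker graph
generated by `P` has size at most `(k-1)^t + 1`. -/
theorem stmt1 (k t : ℕ) (hk : 2 ≤ k) (ht : 1 ≤ t)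
    (P : Matrix (Fin k) (Fin k) ℝ) (hsymm : P.IsSymm)
    (h01 : ∀ i j, P i j ∈ Set.Icc (0 : ℝ) 1)
    (hDB : (¬ SKG.connectedW P) ∨
      ∃ f : Fin k → Bool, ∀ i j : Fin k, 0 < P i j → f i ≠ f j) :
    (∀ G : SimpleGraph (Fin t → Fin k),
        (∀ u v : Fin t → Fin k, G.Adj u v → 0 < SKG.pk P t u v) →
        ∀ v : Fin t → Fin k,
          Set.ncard {u : Fin t → Fin k | G.Reachable v u} ≤ (k - 1) ^ t + 1) ∧
      SKG.skg P t {ω | ∀ v : Fin t → Fin k,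
          Set.ncard {u : Fin t → Fin k | (SKG.graphOf ω).Reachable v u}
            ≤ (k - 1) ^ t + 1} = 1 := by
  have hDB' : (¬ ∀ i j : Fin k, Relation.ReflTransGen (fun a b => 0 < P a b) i j) ∨
      ∃ f : Fin k → Bool, ∀ i j : Fin k, 0 < P i j → f i ≠ f j := hDB
  have hA := fun G hG v => SKGaux.partA hk ht P hsymm h01 hDB' G hG v
  refine ⟨hA, ?_⟩
  haveI : ∀ e : Sym2 (Fin t → Fin k), IsProbabilityMeasure (SKG.bern (SKG.symProb P t e)) :=
    fun e => SKGaux.bern_prob (SKGaux.symProb_mem h01 e).1 (SKGaux.symProb_mem h01 e).2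
  haveI hprob : IsProbabilityMeasure (SKG.skg P t) := by
    rw [SKG.skg]; infer_instance
  set good : Set (Sym2 (Fin t → Fin k) → Bool) := {ω | ∀ v : Fin t → Fin k,
      Set.ncard {u : Fin t → Fin k | (SKG.graphOf ω).Reachable v u}
        ≤ (k - 1) ^ t + 1} with hgood
  set Z : Set (Sym2 (Fin t → Fin k) → Bool) :=
    ⋃ e : {e : Sym2 (Fin t → Fin k) // SKG.symProb P t e = 0}, {ω | ω e.1 = true} with hZdef
  have hZ : SKG.skg P t Z = 0 :=
    measure_iUnion_null fun e => SKGaux.cyl_null hsymm e.1 e.2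
  have hcover : ∀ ω, ω ∉ Z → ω ∈ good := by
    intro ω hω
    have hfalse : ∀ e : Sym2 (Fin t → Fin k), SKG.symProb P t e = 0 → ω e ≠ true := by
      intro e he htrue
      exact hω (Set.mem_iUnion.2 ⟨⟨e, he⟩, htrue⟩)
    intro v
    refine hA (SKG.graphOf ω) ?_ v
    intro u w hadj
    rcases lt_or_eq_of_le (SKGaux.pk_nonneg h01 u w) with h | h
    · exact h
    · exfalso
      have hsp : SKG.symProb P t s(u, w) = 0 := by
        rw [SKGaux.symProb_eq hsymm, ← h]
      exact hfalse _ hsp hadj.2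
  have huniv : (Set.univ : Set (Sym2 (Fin t → Fin k) → Bool)) ⊆ good ∪ Z := by
    intro ω _
    by_cases h : ω ∈ Z
    · exact Or.inr h
    · exact Or.inl (hcover ω h)
  have h1 : (1 : ℝ≥0∞) ≤ SKG.skg P t good := by
    calc (1 : ℝ≥0∞) = SKG.skg P t Set.univ := measure_univ.symm
      _ ≤ SKG.skg P t (good ∪ Z) := measure_mono huniv
      _ ≤ SKG.skg P t good + SKG.skg P t Z := measure_union_le _ _
      _ = SKG.skg P t good := by rw [hZ, add_zero]
  exact le_antisymm prob_le_one h1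
end
end

section
/- Let P ∈ [0,1]^{k×k} be symmetric with column sums 0 < c_1 ≤ c_2 ≤ ⋯ ≤ c_k that are not all equal, and suppose W is connected and non-bipartite. Let f : (0,∞) → ℝ be strictly monotonically increasing and set L_f = (f(c_1),…,f(c_k)). Then for every integer s ≥ 1, ⟨𝟙 M^s, L_f⟩ > ⟨𝟙, L_f⟩, where 𝟙 denotes the all-ones row vector in ℝ^k and ⟨·,·⟩ is the standard inner product on ℝ^k. -/
open Finset MeasureTheory
open scoped Classical ENNReal

noncomputable section

namespace SKGAux

open SKG

variable {k : ℕ} {P : Matrix (Fin k) (Fin k) ℝ}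

lemma pe (hsymm : P.IsSymm) (i j : Fin k) : P i j = P j i :=
  hsymm.apply j i

lemma rowSum_eq (hsymm : P.IsSymm) (i : Fin k) : ∑ j, P i j = colSum P i := by
  unfold colSum
  exact Finset.sum_congr rfl fun j _ => pe hsymm i j

lemma MW_nonneg (hPnn : ∀ i j, 0 ≤ P i j) (hpos : ∀ j, 0 < colSum P j)
    (i j : Fin k) : 0 ≤ MW P i j :=
  div_nonneg (hPnn i j) (hpos i).le

lemma MW_pow_nonneg (hPnn : ∀ i j, 0 ≤ P i j) (hpos : ∀ j, 0 < colSum P j)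
    (s : ℕ) (i j : Fin k) : 0 ≤ (MW P ^ s) i j := by
  induction s generalizing i j with
  | zero =>
    simp only [pow_zero, Matrix.one_apply]
    split <;> norm_num
  | succ n ih =>
    rw [pow_succ, Matrix.mul_apply]
    exact Finset.sum_nonneg fun m _ => mul_nonneg (ih i m) (MW_nonneg hPnn hpos m j)

lemma MW_rowSum (hsymm : P.IsSymm) (hpos : ∀ j, 0 < colSum P j) (i : Fin k) :
    ∑ j, MW P i j = 1 := by
  unfold MW
  simp only [Matrix.of_apply]
  rw [← Finset.sum_div, rowSum_eq hsymm i, div_self (hpos i).ne']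

lemma MW_pow_rowSum (hsymm : P.IsSymm) (hpos : ∀ j, 0 < colSum P j) (s : ℕ) (i : Fin k) :
    ∑ j, (MW P ^ s) i j = 1 := by
  induction s generalizing i with
  | zero => simp [Matrix.one_apply]
  | succ n ih =>
    simp only [pow_succ, Matrix.mul_apply]
    rw [Finset.sum_comm]
    calc ∑ m, ∑ j, (MW P ^ n) i m * MW P m j
        = ∑ m, (MW P ^ n) i m * ∑ j, MW P m j := by
          simp [Finset.mul_sum]
      _ = ∑ m, (MW P ^ n) i m := by
          simp [MW_rowSum hsymm hpos]
      _ = 1 := ih i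

lemma MW_db (hsymm : P.IsSymm) (hpos : ∀ j, 0 < colSum P j) (i j : Fin k) :
    colSum P i * MW P i j = colSum P j * MW P j i := by
  unfold MW
  simp only [Matrix.of_apply]
  rw [mul_div_cancel₀ _ (hpos i).ne', mul_div_cancel₀ _ (hpos j).ne', pe hsymm i j]

lemma MW_pow_db (hsymm : P.IsSymm) (hpos : ∀ j, 0 < colSum P j) (s : ℕ) (i j : Fin k) :
    colSum P i * (MW P ^ s) i j = colSum P j * (MW P ^ s) j i := by
  induction s generalizing i j with
  | zero =>
    simp only [pow_zero, Matrix.one_apply]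
    by_cases h : i = j
    · subst h; simp
    · rw [if_neg h, if_neg (Ne.symm h)]; ring
  | succ n ih =>
    have hL : (MW P ^ (n+1)) i j = ∑ m, (MW P ^ n) i m * MW P m j := by
      rw [pow_succ, Matrix.mul_apply]
    have hR : (MW P ^ (n+1)) j i = ∑ m, MW P j m * (MW P ^ n) m i := by
      rw [pow_succ', Matrix.mul_apply]
    rw [hL, hR, Finset.mul_sum, Finset.mul_sum]
    refine Finset.sum_congr rfl fun m _ => ?_
    calc colSum P i * ((MW P ^ n) i m * MW P m j)
        = (colSum P i * (MW P ^ n) i m) * MW P m j := by ring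
      _ = (colSum P m * (MW P ^ n) m i) * MW P m j := by rw [ih]
      _ = (colSum P m * MW P m j) * (MW P ^ n) m i := by ring
      _ = (colSum P j * MW P j m) * (MW P ^ n) m i := by rw [MW_db hsymm hpos]
      _ = colSum P j * (MW P j m * (MW P ^ n) m i) := by ring

lemma MW_edge_pos (hpos : ∀ j, 0 < colSum P j) {i j : Fin k} (h : 0 < P i j) :
    0 < MW P i j := div_pos h (hpos i)

lemma pow_pos_step (hPnn : ∀ i j, 0 ≤ P i j) (hpos : ∀ j, 0 < colSum P j)
    {s : ℕ} {i j m : Fin k} (h1 : 0 < (MW P ^ s) i j) (h2 : 0 < MW P j m) :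
    0 < (MW P ^ (s + 1)) i m := by
  rw [pow_succ, Matrix.mul_apply]
  refine Finset.sum_pos' (fun x _ => mul_nonneg (MW_pow_nonneg hPnn hpos s i x)
    (MW_nonneg hPnn hpos x m)) ⟨j, Finset.mem_univ j, mul_pos h1 h2⟩

lemma exists_neighbor (hPnn : ∀ i j, 0 ≤ P i j) (hpos : ∀ j, 0 < colSum P j)
    (j : Fin k) : ∃ m, 0 < P m j := by
  by_contra h
  push_neg at h
  have : colSum P j ≤ 0 := Finset.sum_nonpos fun m _ => h m
  exact absurd (hpos j) (not_lt.mpr this)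

/-- Witness at length 1: some edge with unequal column sums. -/
lemma wit1 (hpos : ∀ j, 0 < colSum P j)
    (hne : ∃ i j : Fin k, colSum P i ≠ colSum P j) (hconn : connectedW P) :
    ∃ i j : Fin k, 0 < P i j ∧ colSum P i ≠ colSum P j := by
  by_contra h
  push_neg at h
  obtain ⟨a, b, hab⟩ := hne
  have key : ∀ {x y : Fin k}, Relation.ReflTransGen (fun a b => 0 < P a b) x y →
      colSum P x = colSum P y := by
    intro x y hxy
    induction hxy with
    | refl => rfl
    | tail _ h2 ih => exact ih.trans (h _ _ h2)
  exact hab (key (hconn a b))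

/-- Witness at length 2: a two-step walk with unequal endpoint column sums. -/
lemma wit2 (hsymm : P.IsSymm) (hpos : ∀ j, 0 < colSum P j)
    (hne : ∃ i j : Fin k, colSum P i ≠ colSum P j) (hconn : connectedW P)
    (hnb : nonBipartiteW P) :
    ∃ i m j : Fin k, 0 < P i m ∧ 0 < P m j ∧ colSum P i ≠ colSum P j := by
  by_contra h
  push_neg at h
  -- h : ∀ i m j, 0 < P i m → 0 < P m j → colSum P i = colSum P j
  obtain ⟨a, b, hPab, hcab⟩ := wit1 hpos hne hconn
  set c := colSum P with hc
  -- invariant along walks from a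
  have hΨ : ∀ u : Fin k, (c u = c a ∧ ∀ w, 0 < P u w → c w = c b) ∨
      (c u = c b ∧ ∀ w, 0 < P u w → c w = c a) := by
    intro u
    have hwalk := hconn a u
    induction hwalk with
    | refl =>
      left
      refine ⟨rfl, fun w hw => ?_⟩
      exact h w a b (by rwa [pe hsymm w a]) hPab
    | @tail u v _ h2 ih =>
      rcases ih with ⟨hcu, hN⟩ | ⟨hcu, hN⟩
      · right
        refine ⟨hN v h2, fun w hw => ?_⟩
        exact (h w v u (by rwa [pe hsymm w v]) (by rwa [pe hsymm v u])).trans hcu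
      · left
        refine ⟨hN v h2, fun w hw => ?_⟩
        exact (h w v u (by rwa [pe hsymm w v]) (by rwa [pe hsymm v u])).trans hcu
  -- build a proper 2-coloring, contradicting non-bipartiteness
  refine hnb ⟨fun u => decide (c u = c a), fun i j hij hgeq => ?_⟩
  dsimp only at hgeq
  rw [decide_eq_decide] at hgeq
  rcases hΨ i with ⟨h1, h2⟩ | ⟨h1, h2⟩
  · have hcj : c j = c b := h2 j hij
    have : c j ≠ c a := fun hh => hcab (hh.symm.trans hcj)
    exact this (hgeq.mp h1)
  · have hcj : c j = c a := h2 j hij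
    have : c i ≠ c a := fun hh => hcab (hh.symm.trans h1)
    exact this (hgeq.mpr hcj)

/-- Witness at every positive length. -/
lemma wit (hsymm : P.IsSymm) (hPnn : ∀ i j, 0 ≤ P i j) (hpos : ∀ j, 0 < colSum P j)
    (hne : ∃ i j : Fin k, colSum P i ≠ colSum P j) (hconn : connectedW P)
    (hnb : nonBipartiteW P) :
    ∀ n : ℕ, ∃ i j : Fin k, 0 < (MW P ^ (n + 1)) i j ∧ colSum P i ≠ colSum P j := by
  intro n
  induction n using Nat.strong_induction_on with
  | _ n ih =>
    match n with
    | 0 =>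
      obtain ⟨i, j, hij, hcij⟩ := wit1 hpos hne hconn
      exact ⟨i, j, by simpa [pow_one] using MW_edge_pos hpos hij, hcij⟩
    | 1 =>
      obtain ⟨i, m, j, h1, h2, hcij⟩ := wit2 hsymm hpos hne hconn hnb
      have hm1 : 0 < (MW P ^ 1) i m := by
        simpa [pow_one] using MW_edge_pos hpos h1
      exact ⟨i, j, pow_pos_step hPnn hpos hm1 (MW_edge_pos hpos h2), hcij⟩
    | (m + 2) =>
      obtain ⟨i, j, hij, hcij⟩ := ih m (by omega)
      obtain ⟨w, hw⟩ := exists_neighbor hPnn hpos j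
      have hjw : 0 < P j w := by rwa [pe hsymm j w]
      have s1 : 0 < (MW P ^ (m + 2)) i w :=
        pow_pos_step hPnn hpos hij (MW_edge_pos hpos hjw)
      have s2 : 0 < (MW P ^ (m + 3)) i j :=
        pow_pos_step hPnn hpos s1 (MW_edge_pos hpos hw)
      exact ⟨i, j, s2, hcij⟩

end SKGAux

/-- If `P` is symmetric with positive, nondecreasing, not-all-equal
column sums and `W` is connected and non-bipartite, then for any strictly increasing
`f` on `(0,∞)`, setting `L_f = (f(c₁),…,f(c_k))`, one has `⟨𝟙 Mˢ, L_f⟩ > ⟨𝟙, L_f⟩`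
for every `s ≥ 1`. -/
theorem stmt3 (k : ℕ) (P : Matrix (Fin k) (Fin k) ℝ) (hsymm : P.IsSymm)
    (h01 : ∀ i j, P i j ∈ Set.Icc (0 : ℝ) 1)
    (hpos : ∀ j, 0 < SKG.colSum P j) (hmono : Monotone (SKG.colSum P))
    (hne : ∃ i j : Fin k, SKG.colSum P i ≠ SKG.colSum P j)
    (hconn : SKG.connectedW P) (hnb : SKG.nonBipartiteW P)
    (f : ℝ → ℝ) (hf : StrictMonoOn f (Set.Ioi 0)) :
    ∀ s : ℕ, 1 ≤ s →
      SKG.ip (fun _ => (1 : ℝ)) (fun j => f (SKG.colSum P j)) <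
        SKG.ip (Matrix.vecMul (fun _ => (1 : ℝ)) ((SKG.MW P) ^ s))
          (fun j => f (SKG.colSum P j)) := by
  intro s hs
  have hPnn : ∀ i j, 0 ≤ P i j := fun i j => (h01 i j).1
  set c := SKG.colSum P with hc
  set A := (SKG.MW P) ^ s with hA
  set F : Fin k → ℝ := fun j => f (c j) with hF
  have hAnn : ∀ i j, 0 ≤ A i j := SKGAux.MW_pow_nonneg hPnn hpos s
  have hrow : ∀ i, ∑ j, A i j = 1 := SKGAux.MW_pow_rowSum hsymm hpos s
  have hdb : ∀ i j, c i * A i j = c j * A j i := SKGAux.MW_pow_db hsymm hpos s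
  obtain ⟨n, rfl⟩ : ∃ n, s = n + 1 := ⟨s - 1, by omega⟩
  obtain ⟨i₀, j₀, hApos, hcne⟩ := SKGAux.wit hsymm hPnn hpos hne hconn hnb n
  -- unfold the goal
  have hgoal : SKG.ip (fun _ => (1 : ℝ)) F = ∑ i, F i := by
    simp [SKG.ip]
  have hgoal2 : SKG.ip (Matrix.vecMul (fun _ => (1 : ℝ)) A) F
      = ∑ j, (∑ i, A i j) * F j := by
    simp [SKG.ip, Matrix.vecMul, dotProduct]
  rw [hgoal, hgoal2]
  -- the difference
  set S : ℝ := ∑ i, ∑ j, A i j * (F j - F i) with hS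
  have h1 : (∑ j, (∑ i, A i j) * F j) - (∑ i, F i) = S := by
    have e1 : ∑ j, (∑ i, A i j) * F j = ∑ i, ∑ j, A i j * F j := by
      rw [Finset.sum_comm]
      exact Finset.sum_congr rfl fun j _ => Finset.sum_mul _ _ _
    have e2 : ∑ i, F i = ∑ i, ∑ j, A i j * F i := by
      refine Finset.sum_congr rfl fun i _ => ?_
      rw [← Finset.sum_mul, hrow i, one_mul]
    rw [e1, e2, hS, ← Finset.sum_sub_distrib]
    refine Finset.sum_congr rfl fun i _ => ?_
    rw [← Finset.sum_sub_distrib]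
    exact Finset.sum_congr rfl fun j _ => by ring
  have key : ∀ i j, A i j * (F j - F i) + A j i * (F i - F j)
      = A j i * ((c j - c i) * (F j - F i)) / c i := by
    intro i j
    have hcne' : c i ≠ 0 := (hpos i).ne'
    field_simp
    linear_combination (F j - F i) * hdb i j
  have hnn : ∀ i j : Fin k, 0 ≤ A j i * ((c j - c i) * (F j - F i)) / c i := by
    intro i j
    apply div_nonneg _ (hpos i).le
    refine mul_nonneg (hAnn j i) ?_
    rcases lt_trichotomy (c i) (c j) with h | h | h
    · have : F i < F j := hf (hpos i) (hpos j) h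
      exact mul_nonneg (by linarith) (by linarith)
    · rw [h]; simp
    · have : F j < F i := hf (hpos j) (hpos i) h
      exact le_of_lt (mul_pos_of_neg_of_neg (by linarith) (by linarith))
  have hposterm : 0 < A i₀ j₀ * ((c i₀ - c j₀) * (F i₀ - F j₀)) / c j₀ := by
    apply div_pos _ (hpos j₀)
    refine mul_pos hApos ?_
    rcases lt_or_gt_of_ne hcne with h | h
    · have : F i₀ < F j₀ := hf (hpos i₀) (hpos j₀) h
      exact mul_pos_of_neg_of_neg (by linarith) (by linarith)
    · have : F j₀ < F i₀ := hf (hpos j₀) (hpos i₀) h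
      exact mul_pos (by linarith) (by linarith)
  have h2 : S + S = ∑ i, ∑ j, (A i j * (F j - F i) + A j i * (F i - F j)) := by
    have e3 : S = ∑ i, ∑ j, A j i * (F i - F j) := by
      rw [hS, Finset.sum_comm]
    nth_rewrite 2 [e3]
    rw [hS]
    rw [← Finset.sum_add_distrib]
    refine Finset.sum_congr rfl fun i _ => (Finset.sum_add_distrib).symm
  have hSpos : 0 < S := by
    have : 0 < S + S := by
      rw [h2]
      refine Finset.sum_pos'
        (fun i _ => Finset.sum_nonneg fun j _ => (key i j) ▸ hnn i j)
        ⟨j₀, Finset.mem_univ j₀, ?_⟩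
      refine Finset.sum_pos'
        (fun j _ => (key j₀ j) ▸ hnn j₀ j)
        ⟨i₀, Finset.mem_univ i₀, ?_⟩
      rw [key j₀ i₀]
      exact hposterm
    linarith
  linarith
end
end

section
/- Let P ∈ [0,1]^{k×k} be symmetric with positive column sums c_1,…,c_k, and suppose W is connected and non-bipartite; let C = diag(c_1,…,c_k). Then for every integer s ≥ 2, the matrix P' = (PC^{-1})^{s-1}P is symmetric, its j-th column sum equals c_j for every j ∈ [k], and the graph on [k] with an edge {i,j} whenever P'_{ij} > 0 is connected and non-bipartite. -/
open Finset MeasureTheory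
open scoped Classical ENNReal

noncomputable section

namespace Stmt4Aux

variable {k : ℕ}

lemma mul_nonneg_entries {M N : Matrix (Fin k) (Fin k) ℝ}
    (hM : ∀ i j, 0 ≤ M i j) (hN : ∀ i j, 0 ≤ N i j) :
    ∀ i j, 0 ≤ (M * N) i j := by
  intro i j
  rw [Matrix.mul_apply]
  exact Finset.sum_nonneg fun l _ => mul_nonneg (hM i l) (hN l j)

lemma mul_pos_iff' {M N : Matrix (Fin k) (Fin k) ℝ}
    (hM : ∀ i j, 0 ≤ M i j) (hN : ∀ i j, 0 ≤ N i j) (i j : Fin k) :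
    0 < (M * N) i j ↔ ∃ l, 0 < M i l ∧ 0 < N l j := by
  rw [Matrix.mul_apply]
  constructor
  · intro h
    by_contra hc
    push_neg at hc
    have hz : ∑ l, M i l * N l j = 0 := by
      refine Finset.sum_eq_zero fun l _ => ?_
      rcases (hM i l).lt_or_eq with h1 | h1
      · have h2 := hc l h1
        have : N l j = 0 := le_antisymm h2 (hN l j)
        rw [this, mul_zero]
      · rw [← h1, zero_mul]
    rw [hz] at h; exact lt_irrefl _ h
  · rintro ⟨l, h1, h2⟩
    exact Finset.sum_pos' (fun l _ => mul_nonneg (hM i l) (hN l j))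
      ⟨l, Finset.mem_univ l, mul_pos h1 h2⟩

lemma pow_nonneg_entries {M : Matrix (Fin k) (Fin k) ℝ}
    (hM : ∀ i j, 0 ≤ M i j) (n : ℕ) : ∀ i j, 0 ≤ (M ^ n) i j := by
  induction n with
  | zero => intro i j; simp [Matrix.one_apply]; split <;> norm_num
  | succ n ih =>
    rw [pow_succ]
    exact mul_nonneg_entries ih hM

end Stmt4Aux


/-- If `P` is symmetric with positive column sums and `W` is connected and
non-bipartite, then for every `s ≥ 2` the matrix `P' = (P C⁻¹)^{s-1} P` is symmetric,
has the same column sums as `P`, and its positivity graph is connected and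
non-bipartite. -/
theorem stmt4 (k : ℕ) (P : Matrix (Fin k) (Fin k) ℝ) (hsymm : P.IsSymm)
    (h01 : ∀ i j, P i j ∈ Set.Icc (0 : ℝ) 1)
    (hpos : ∀ j, 0 < SKG.colSum P j)
    (hconn : SKG.connectedW P) (hnb : SKG.nonBipartiteW P)
    (s : ℕ) (hs : 2 ≤ s)
    (P' : Matrix (Fin k) (Fin k) ℝ)
    (hP' : P' = (P * Matrix.diagonal (fun j => (SKG.colSum P j)⁻¹)) ^ (s - 1) * P) :
    P'.IsSymm ∧ (∀ j, SKG.colSum P' j = SKG.colSum P j) ∧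
      SKG.connectedW P' ∧ SKG.nonBipartiteW P' := by
  set c : Fin k → ℝ := SKG.colSum P with hc
  set Q : Matrix (Fin k) (Fin k) ℝ := P * Matrix.diagonal (fun j => (c j)⁻¹) with hQdef
  have hP0 : ∀ i j, 0 ≤ P i j := fun i j => (h01 i j).1
  have hQapp : ∀ i j, Q i j = P i j * (c j)⁻¹ := by
    intro i j; rw [hQdef, Matrix.mul_diagonal]
  have hQ0 : ∀ i j, 0 ≤ Q i j := fun i j => by
    rw [hQapp]; exact mul_nonneg (hP0 i j) (inv_nonneg.mpr (hpos j).le)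
  have hQpos : ∀ i j, (0 < Q i j ↔ 0 < P i j) := by
    intro i j
    rw [hQapp]
    constructor
    · intro h
      rcases (hP0 i j).lt_or_eq with h1 | h1
      · exact h1
      · rw [← h1, zero_mul] at h; exact absurd h (lt_irrefl 0)
    · intro h; exact mul_pos h (inv_pos.mpr (hpos j))
  -- splitting of powers
  have hPn0 : ∀ n i j, 0 ≤ (P ^ n) i j := fun n => Stmt4Aux.pow_nonneg_entries hP0 n
  have hsplit : ∀ m n (i j : Fin k),
      0 < (P ^ (m + n)) i j ↔ ∃ l, 0 < (P ^ m) i l ∧ 0 < (P ^ n) l j := by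
    intro m n i j
    rw [pow_add]
    exact Stmt4Aux.mul_pos_iff' (hPn0 m) (hPn0 n) i j
  have hconcat : ∀ {m n} {i j l : Fin k}, 0 < (P ^ m) i j → 0 < (P ^ n) j l →
      0 < (P ^ (m + n)) i l := by
    intro m n i j l h1 h2
    exact (hsplit m n i l).mpr ⟨j, h1, h2⟩
  -- symmetry of powers
  have hPnsymm : ∀ n (i j : Fin k), (P ^ n) i j = (P ^ n) j i := by
    intro n i j
    have h : (P ^ n).IsSymm := hsymm.pow n
    exact Matrix.IsSymm.apply h j i
  have hWsymm : ∀ {n} {i j : Fin k}, 0 < (P ^ n) i j → 0 < (P ^ n) j i := by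
    intro n i j h; rwa [hPnsymm n j i]
  -- zero-length walks
  have hW0 : ∀ i j : Fin k, 0 < (P ^ 0) i j ↔ i = j := by
    intro i j
    rw [pow_zero, Matrix.one_apply]
    split
    · simp_all
    · simp_all
  -- ReflTransGen gives a walk of some length
  have hwlk : ∀ i j : Fin k, Relation.ReflTransGen (fun a b => 0 < P a b) i j →
      ∃ n, 0 < (P ^ n) i j := by
    intro i j h
    induction h with
    | refl => exact ⟨0, (hW0 i i).mpr rfl⟩
    | tail hab hbc ih =>
      obtain ⟨n, hn⟩ := ih
      refine ⟨n + 1, hconcat hn ?_⟩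
      rwa [pow_one]
  -- 2-loops at every vertex
  have h2loop : ∀ j : Fin k, 0 < (P ^ 2) j j := by
    intro j
    have : ∃ i, 0 < P i j := by
      by_contra hcon
      push_neg at hcon
      have : SKG.colSum P j ≤ 0 := Finset.sum_nonpos fun i _ => hcon i
      exact absurd (hpos j) (not_lt.mpr this)
    obtain ⟨i, hi⟩ := this
    have hji : 0 < P j i := by
      have h2 : P j i = P i j := (Matrix.IsSymm.apply hsymm j i).symm
      rw [h2]; exact hi
    refine (hsplit 1 1 j j).mpr ⟨i, ?_, ?_⟩ <;> rw [pow_one] <;> assumption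
  have h2aloop : ∀ (a : ℕ) (j : Fin k), 0 < (P ^ (2 * a)) j j := by
    intro a j
    induction a with
    | zero => exact (hW0 j j).mpr rfl
    | succ a ih =>
      have : 2 * (a + 1) = 2 * a + 2 := by ring
      rw [this]
      exact hconcat ih (h2loop j)
  -- nonempty
  have hk : 0 < k := by
    rcases Nat.eq_zero_or_pos k with h | h
    · subst h
      exact absurd ⟨fun _ => true, fun i => i.elim0⟩ hnb
    · exact h
  -- odd closed walk exists somewhere
  have hodd : ∃ (v : Fin k) (n : ℕ), Odd n ∧ 0 < (P ^ n) v v := by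
    by_contra hcon
    push_neg at hcon
    apply hnb
    have i0 : Fin k := ⟨0, hk⟩
    refine ⟨fun i => decide (∃ n, Odd n ∧ 0 < (P ^ n) i0 i), ?_⟩
    intro i j hij hfij
    have hiff : (∃ n, Odd n ∧ 0 < (P ^ n) i0 i) ↔ (∃ n, Odd n ∧ 0 < (P ^ n) i0 j) :=
      decide_eq_decide.mp hfij
    have hij1 : 0 < (P ^ 1) i j := by rwa [pow_one]
    by_cases hE : ∃ n, Odd n ∧ 0 < (P ^ n) i0 i
    · obtain ⟨o1, ho1, h1⟩ := hE
      obtain ⟨o2, ho2, h2⟩ := hiff.mp ⟨o1, ho1, h1⟩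
      -- closed odd walk at i : i → i0 (o1) → j (o2) → i (1)
      have hw : 0 < (P ^ (o1 + o2 + 1)) i i :=
        hconcat (hconcat (hWsymm h1) h2) (hWsymm hij1)
      have : Odd (o1 + o2 + 1) := by
        rcases ho1 with ⟨a, ha⟩; rcases ho2 with ⟨b, hb⟩
        exact ⟨a + b + 1, by omega⟩
      exact absurd hw (not_lt.mpr (hcon i _ this))
    · obtain ⟨m1, hm1⟩ := hwlk i0 i (hconn i0 i)
      obtain ⟨m2, hm2⟩ := hwlk i0 j (hconn i0 j)
      have he1 : ¬ Odd m1 := fun ho => hE ⟨m1, ho, hm1⟩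
      have he2 : ¬ Odd m2 := fun ho => (hiff.not.mp hE) ⟨m2, ho, hm2⟩
      have hw : 0 < (P ^ (m1 + 1 + m2)) i0 i0 :=
        hconcat (hconcat hm1 hij1) (hWsymm hm2)
      have : Odd (m1 + 1 + m2) := by
        rw [Nat.odd_iff] at *
        omega
      exact absurd hw (not_lt.mpr (hcon i0 _ this))
  -- eventual walks of every large length
  have hE : ∀ i j : Fin k, ∃ N, ∀ L, N ≤ L → 0 < (P ^ L) i j := by
    intro i j
    obtain ⟨d, hd⟩ := hwlk i j (hconn i j)
    obtain ⟨v, n0, hn0odd, hn0⟩ := hodd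
    obtain ⟨e, he⟩ := hwlk j v (hconn j v)
    have hq : 0 < (P ^ (e + n0 + e)) j j := hconcat (hconcat he hn0) (hWsymm he)
    have hqodd : Odd (e + n0 + e) := by
      rw [Nat.odd_iff] at *; omega
    refine ⟨d + (e + n0 + e), fun L hL => ?_⟩
    rcases Nat.even_or_odd (L - d) with hpar | hpar
    · obtain ⟨a, ha⟩ : ∃ a, L = d + 2 * a := by
        rw [Nat.even_iff] at hpar
        exact ⟨(L - d) / 2, by omega⟩
      rw [ha]
      exact hconcat hd (h2aloop a j)
    · obtain ⟨a, ha⟩ : ∃ a, L = d + (e + n0 + e) + 2 * a := by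
        rw [Nat.odd_iff] at hpar hqodd
        exact ⟨(L - d - (e + n0 + e)) / 2, by omega⟩
      rw [ha]
      exact hconcat (hconcat hd hq) (h2aloop a j)
  -- entry positivity of P' vs P^s
  have hkey : ∀ m (i j : Fin k), (0 < (Q ^ m * P) i j ↔ 0 < (P ^ (m + 1)) i j) := by
    intro m
    induction m with
    | zero => intro i j; rw [pow_zero, one_mul, zero_add, pow_one]
    | succ m ih =>
      intro i j
      have hQm0 : ∀ i j, 0 ≤ (Q ^ m * P) i j :=
        Stmt4Aux.mul_nonneg_entries (Stmt4Aux.pow_nonneg_entries hQ0 m) hP0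
      have e1 : Q ^ (m + 1) * P = Q * (Q ^ m * P) := by
        rw [pow_succ', mul_assoc]
      rw [e1, Stmt4Aux.mul_pos_iff' hQ0 hQm0]
      have e2 : (m + 1 + 1) = 1 + (m + 1) := by omega
      rw [e2, hsplit 1 (m + 1)]
      apply exists_congr
      intro l
      rw [hQpos, ih, pow_one]
  have hP'pos : ∀ i j, (0 < P' i j ↔ 0 < (P ^ s) i j) := by
    intro i j
    rw [hP']
    have : s - 1 + 1 = s := by omega
    rw [hkey (s - 1) i j, this]
  -- Part 1: symmetry
  have part1 : P'.IsSymm := by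
    have hsc : SemiconjBy P (Matrix.diagonal (fun j => (c j)⁻¹) * P)
        (P * Matrix.diagonal (fun j => (c j)⁻¹)) := (mul_assoc _ _ _).symm
    have h := hsc.pow_right (s - 1)
    rw [SemiconjBy] at h
    rw [hP', hQdef, Matrix.IsSymm, Matrix.transpose_mul, Matrix.transpose_pow,
      Matrix.transpose_mul, Matrix.diagonal_transpose, hsymm, h]
  -- Part 2: column sums
  have hcolQ : ∀ l, ∑ i, Q i l = 1 := by
    intro l
    have : ∑ i, Q i l = (∑ i, P i l) * (c l)⁻¹ := by
      rw [Finset.sum_mul]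
      exact Finset.sum_congr rfl fun i _ => hQapp i l
    rw [this]
    exact mul_inv_cancel₀ (ne_of_gt (hpos l))
  have hcolind : ∀ m j, SKG.colSum (Q ^ m * P) j = SKG.colSum P j := by
    intro m
    induction m with
    | zero => intro j; rw [pow_zero, one_mul]
    | succ m ih =>
      intro j
      have e1 : Q ^ (m + 1) * P = Q * (Q ^ m * P) := by
        rw [pow_succ', mul_assoc]
      rw [e1]
      unfold SKG.colSum
      have : ∑ i, (Q * (Q ^ m * P)) i j = ∑ l, (∑ i, Q i l) * (Q ^ m * P) l j := by
        simp_rw [Matrix.mul_apply, Finset.sum_mul]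
        rw [Finset.sum_comm]
      rw [this]
      simp_rw [hcolQ, one_mul]
      exact ih j
  have part2 : ∀ j, SKG.colSum P' j = SKG.colSum P j := by
    intro j
    rw [hP']
    exact hcolind (s - 1) j
  -- decompose long walks into s-walks
  have hdecomp : ∀ m (i j : Fin k), 0 < (P ^ (s * m)) i j →
      Relation.ReflTransGen (fun a b => 0 < (P ^ s) a b) i j := by
    intro m
    induction m with
    | zero =>
      intro i j h
      rw [Nat.mul_zero] at h
      rw [(hW0 i j).mp h]
    | succ m ih =>
      intro i j h
      rw [Nat.mul_succ] at h
      obtain ⟨l, h1, h2⟩ := (hsplit (s * m) s i j).mp h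
      exact (ih i l h1).tail h2
  -- Part 3: connectivity
  have part3 : SKG.connectedW P' := by
    intro i j
    obtain ⟨N, hN⟩ := hE i j
    have hsN : N ≤ s * N + s := by nlinarith
    have hw : 0 < (P ^ (s * (N + 1))) i j := by
      rw [Nat.mul_succ]
      exact hN _ hsN
    have := hdecomp (N + 1) i j hw
    exact Relation.ReflTransGen.mono (fun a b hab => (hP'pos a b).mpr hab) i j this
  -- Part 4: non-bipartite
  have part4 : SKG.nonBipartiteW P' := by
    rintro ⟨f, hf⟩
    have hf' : ∀ i j, 0 < (P ^ s) i j → f i ≠ f j := fun i j h =>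
      hf i j ((hP'pos i j).mpr h)
    have hpar : ∀ m (i j : Fin k), 0 < (P ^ (s * m)) i j →
        (Even m → f i = f j) ∧ (Odd m → f i ≠ f j) := by
      intro m
      induction m with
      | zero =>
        intro i j h
        rw [Nat.mul_zero] at h
        rw [(hW0 i j).mp h]
        exact ⟨fun _ => rfl, fun ho => absurd ho (by simp)⟩
      | succ m ih =>
        intro i j h
        rw [Nat.mul_succ] at h
        obtain ⟨l, h1, h2⟩ := (hsplit (s * m) s i j).mp h
        have hil := ih i l h1
        have hlj := hf' l j h2
        constructor
        · intro hev
          have hm : Odd m := by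
            rw [Nat.even_iff] at hev; rw [Nat.odd_iff]; omega
          have := hil.2 hm
          revert this hlj
          cases f i <;> cases f l <;> cases f j <;> simp
        · intro hod hfij
          have hm : Even m := by
            rw [Nat.odd_iff] at hod; rw [Nat.even_iff]; omega
          have := hil.1 hm
          rw [← this] at hlj
          exact hlj hfij
    have i0 : Fin k := ⟨0, hk⟩
    obtain ⟨N, hN⟩ := hE i0 i0
    have hm : Odd (2 * N + 1) := ⟨N, by omega⟩
    have hw : 0 < (P ^ (s * (2 * N + 1))) i0 i0 := by
      apply hN
      nlinarith
    exact (hpar (2 * N + 1) i0 i0 hw).2 hm rfl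
  exact ⟨part1, part2, part3, part4⟩
end
end

section
/- Let P ∈ [0,1]^{k×k} be symmetric with positive column sums c_1 ≤ ⋯ ≤ c_k, let v ∈ [k]^t have signature σ = σ(v) with ⟨σ, L⟩ > 0, and set d = e^{⟨σ,L⟩}. Then for every δ > 0, the total weight of neighbors of v in W^{⊗t} whose signature τ satisfies ‖τ − σM‖ ≤ δ is at least d^t(1 − 2k e^{−2δ²t}); that is, ∑_{u ∈ [k]^t : ‖σ(u) − σM‖ ≤ δ} P^{⊗t}_{uv} ≥ d^t (1 − 2k e^{−2δ² t}). -/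
open Finset MeasureTheory
open scoped Classical ENNReal

noncomputable section

lemma hoeffding_bern {p : ℝ} (hp0 : 0 ≤ p) (hp1 : p ≤ 1) (s : ℝ) :
    p * Real.exp (s * (1 - p)) + (1 - p) * Real.exp (-(s * p)) ≤ Real.exp (s ^ 2 / 8) := by
  set D : ℝ → ℝ := fun x => 1 - p + p * Real.exp x with hD
  have hDpos : ∀ x, 0 < D x := by
    intro x
    rcases eq_or_lt_of_le hp1 with h | h
    · simp only [hD, h]
      simpa using Real.exp_pos x
    · have h2 := mul_nonneg hp0 (Real.exp_nonneg x)
      simp only [hD]; linarith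
  set q : ℝ → ℝ := fun x => p * Real.exp x / D x with hq
  have hq0 : ∀ x, 0 ≤ q x := fun x => div_nonneg (mul_nonneg hp0 (Real.exp_nonneg x)) (hDpos x).le
  have hq1 : ∀ x, q x ≤ 1 := by
    intro x
    rw [hq]
    rw [div_le_one (hDpos x)]
    simp only [hD]; linarith
  have hDderiv : ∀ x, HasDerivAt D (p * Real.exp x) x := by
    intro x
    exact ((Real.hasDerivAt_exp x).const_mul p).const_add (1 - p)
  have hqderiv : ∀ x, HasDerivAt q (q x * (1 - q x)) x := by
    intro x
    have h := ((Real.hasDerivAt_exp x).const_mul p).div (hDderiv x) (hDpos x).ne'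
    refine h.congr_deriv ?_
    have : D x ≠ 0 := (hDpos x).ne'
    simp only [hq]
    field_simp
  have hqlip : LipschitzWith (1/4 : NNReal) q := by
    apply lipschitzWith_of_nnnorm_deriv_le (fun x => (hqderiv x).differentiableAt)
    intro x
    rw [(hqderiv x).deriv, ← NNReal.coe_le_coe, coe_nnnorm, Real.norm_eq_abs,
      abs_of_nonneg (mul_nonneg (hq0 x) (by linarith [hq1 x]))]
    push_cast
    nlinarith [sq_nonneg (q x - 1/2)]
  have hq_near : ∀ x, |q x - p| ≤ |x| / 4 := by
    intro x
    have h0 : q 0 = p := by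
      simp only [hq, hD, Real.exp_zero, mul_one]
      rw [show 1 - p + p = 1 by ring, div_one]
    have := hqlip.dist_le_mul x 0
    rw [Real.dist_eq, Real.dist_eq, h0] at this
    simpa [div_eq_mul_inv, mul_comm] using this
  set f : ℝ → ℝ := fun x => Real.log (D x) - x * p - x ^ 2 / 8 with hf
  have hfderiv : ∀ x, HasDerivAt f (q x - p - x / 4) x := by
    intro x
    have hlog : HasDerivAt (fun x => Real.log (D x)) (p * Real.exp x / D x) x :=
      (hDderiv x).log (hDpos x).ne'
    have hsq : HasDerivAt (fun x : ℝ => x ^ 2 / 8) (x / 4) x := by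
      have := (hasDerivAt_pow 2 x).div_const 8
      refine this.congr_deriv ?_
      norm_num
      ring
    exact (hlog.sub (hasDerivAt_mul_const p)).sub hsq
  have hf0 : f 0 = 0 := by
    simp [hf, hD]
  have hfle : ∀ x, f x ≤ 0 := by
    intro x
    rcases le_total 0 x with hx | hx
    · have hanti : AntitoneOn f (Set.Ici (0 : ℝ)) := by
        apply antitoneOn_of_deriv_nonpos (convex_Ici 0)
        · exact fun y _ => ((hfderiv y).differentiableAt.continuousAt).continuousWithinAt
        · exact fun y _ => (hfderiv y).differentiableAt.differentiableWithinAt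
        · intro y hy
          rw [interior_Ici] at hy
          rw [(hfderiv y).deriv]
          have hy' : (0:ℝ) < y := hy
          have := hq_near y
          rw [abs_of_pos hy'] at this
          have := abs_le.1 this
          linarith [this.2]
      have := hanti (Set.self_mem_Ici) (Set.mem_Ici.2 hx) hx
      rw [hf0] at this; exact this
    · have hmono : MonotoneOn f (Set.Iic (0 : ℝ)) := by
        apply monotoneOn_of_deriv_nonneg (convex_Iic 0)
        · exact fun y _ => ((hfderiv y).differentiableAt.continuousAt).continuousWithinAt
        · exact fun y _ => (hfderiv y).differentiableAt.differentiableWithinAt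
        · intro y hy
          rw [interior_Iic] at hy
          rw [(hfderiv y).deriv]
          have hy' : y < (0:ℝ) := hy
          have := hq_near y
          rw [abs_of_neg hy'] at this
          have := abs_le.1 this
          linarith [this.1]
      have := hmono (Set.mem_Iic.2 hx) (Set.self_mem_Iic) hx
      rw [hf0] at this; exact this
  have hDle : D s ≤ Real.exp (s * p + s ^ 2 / 8) := by
    have := hfle s
    have h1 : Real.log (D s) ≤ s * p + s ^ 2 / 8 := by simp only [hf] at this; linarith
    calc D s = Real.exp (Real.log (D s)) := (Real.exp_log (hDpos s)).symm
      _ ≤ _ := Real.exp_le_exp.2 h1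
  have key : p * Real.exp (s * (1 - p)) + (1 - p) * Real.exp (-(s * p))
      = Real.exp (-(s * p)) * D s := by
    simp only [hD]
    rw [show s * (1 - p) = s + -(s * p) by ring, Real.exp_add]
    ring
  rw [key]
  calc Real.exp (-(s * p)) * D s ≤ Real.exp (-(s * p)) * Real.exp (s * p + s ^ 2 / 8) :=
        mul_le_mul_of_nonneg_left hDle (Real.exp_nonneg _)
    _ = Real.exp (s ^ 2 / 8) := by rw [← Real.exp_add]; ring_nf

section aux
variable {k t : ℕ} (P : Matrix (Fin k) (Fin k) ℝ)

lemma skg_sum_biUnion_le {α ι : Type*} [DecidableEq α] {f : α → ℝ} (hf : ∀ a, 0 ≤ f a)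
    (s : Finset ι) (g : ι → Finset α) :
    ∑ x ∈ s.biUnion g, f x ≤ ∑ i ∈ s, ∑ x ∈ g i, f x := by
  classical
  induction s using Finset.induction with
  | empty => simp
  | @insert a s h ih =>
    rw [Finset.biUnion_insert, Finset.sum_insert h]
    have h1 := Finset.sum_union_inter (s₁ := g a) (s₂ := s.biUnion g) (f := f)
    have h2 : 0 ≤ ∑ x ∈ g a ∩ s.biUnion g, f x := Finset.sum_nonneg fun x _ => hf x
    have h3 : ∑ x ∈ g a ∪ s.biUnion g, f x ≤ ∑ x ∈ g a, f x + ∑ x ∈ s.biUnion g, f x := by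
      linarith
    exact h3.trans (by linarith)

lemma skg_colfactor (h01 : ∀ i j, P i j ∈ Set.Icc (0 : ℝ) 1) (hpos : ∀ j, 0 < SKG.colSum P j)
    (i j' : Fin k) (s : ℝ) :
    ∑ j, P j j' * Real.exp (s * ((if j = i then (1:ℝ) else 0) - P i j' / SKG.colSum P j'))
      ≤ SKG.colSum P j' * Real.exp (s ^ 2 / 8) := by
  set c := SKG.colSum P j' with hc
  have hcpos := hpos j'
  set p := P i j' / c with hp
  have hPle : P i j' ≤ c := by
    rw [hc, SKG.colSum]
    exact Finset.single_le_sum (fun j _ => (h01 j j').1) (Finset.mem_univ i)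
  have hp0 : 0 ≤ p := div_nonneg (h01 i j').1 hcpos.le
  have hp1 : p ≤ 1 := (div_le_one hcpos).2 hPle
  set f : Fin k → ℝ := fun j =>
    P j j' * Real.exp (s * ((if j = i then (1:ℝ) else 0) - p)) with hf
  have hsplit : ∑ j, f j = f i + ∑ j ∈ Finset.univ.erase i, f j :=
    (Finset.add_sum_erase Finset.univ f (Finset.mem_univ i)).symm
  have herase : ∑ j ∈ Finset.univ.erase i, f j
      = (c - P i j') * Real.exp (-(s * p)) := by
    have : ∀ j ∈ Finset.univ.erase i, f j = P j j' * Real.exp (-(s * p)) := by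
      intro j hj
      have hne : j ≠ i := Finset.ne_of_mem_erase hj
      simp only [hf, if_neg hne]
      ring_nf
    rw [Finset.sum_congr rfl this, ← Finset.sum_mul]
    congr 1
    have := Finset.sum_erase_add Finset.univ (fun j => P j j') (Finset.mem_univ i)
    rw [hc, SKG.colSum]
    linarith
  have hfi : f i = c * p * Real.exp (s * (1 - p)) := by
    simp only [hf, if_pos rfl]
    rw [hp, if_pos trivial]
    have hc0 : c ≠ 0 := hcpos.ne'
    field_simp
  have hPip : c - P i j' = c * (1 - p) := by
    rw [hp]; have hc0 : c ≠ 0 := hcpos.ne'; field_simp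
  rw [hsplit, herase, hfi, hPip]
  have := hoeffding_bern hp0 hp1 s
  calc c * p * Real.exp (s * (1 - p)) + c * (1 - p) * Real.exp (-(s * p))
      = c * (p * Real.exp (s * (1 - p)) + (1 - p) * Real.exp (-(s * p))) := by ring
    _ ≤ c * Real.exp (s ^ 2 / 8) := mul_le_mul_of_nonneg_left this hcpos.le

lemma skg_tail (h01 : ∀ i j, P i j ∈ Set.Icc (0 : ℝ) 1) (hpos : ∀ j, 0 < SKG.colSum P j)
    (v : Fin t → Fin k) (i : Fin k) (s δ : ℝ) (hs : s ^ 2 = 16 * δ ^ 2)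
    (S : Finset (Fin t → Fin k))
    (hS : ∀ u ∈ S, 4 * t * δ ^ 2 ≤
      s * ∑ l, ((if u l = i then (1:ℝ) else 0) - P i (v l) / SKG.colSum P (v l))) :
    ∑ u ∈ S, SKG.pk P t u v ≤ (∏ l, SKG.colSum P (v l)) * Real.exp (-2 * δ ^ 2 * t) := by
  set g : Fin t → Fin k → ℝ := fun l j =>
    P j (v l) * Real.exp (s * ((if j = i then (1:ℝ) else 0) - P i (v l) / SKG.colSum P (v l)))
    with hg
  have hgnn : ∀ l j, 0 ≤ g l j := fun l j =>
    mul_nonneg (h01 j (v l)).1 (Real.exp_nonneg _)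
  have step1 : ∀ u ∈ S, SKG.pk P t u v ≤ Real.exp (-(4 * t * δ ^ 2)) * ∏ l, g l (u l) := by
    intro u hu
    have hprod : ∏ l, g l (u l) = SKG.pk P t u v *
        Real.exp (s * ∑ l, ((if u l = i then (1:ℝ) else 0) - P i (v l) / SKG.colSum P (v l))) := by
      rw [Finset.mul_sum, Real.exp_sum, SKG.pk, ← Finset.prod_mul_distrib]
    have hpknn : 0 ≤ SKG.pk P t u v := Finset.prod_nonneg fun l _ => (h01 _ _).1
    have hexp : Real.exp (4 * t * δ ^ 2) ≤ Real.exp (s *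
        ∑ l, ((if u l = i then (1:ℝ) else 0) - P i (v l) / SKG.colSum P (v l))) :=
      Real.exp_le_exp.2 (hS u hu)
    calc SKG.pk P t u v
        = Real.exp (-(4 * t * δ ^ 2)) * (SKG.pk P t u v * Real.exp (4 * t * δ ^ 2)) := by
          rw [Real.exp_neg]
          field_simp
      _ ≤ Real.exp (-(4 * t * δ ^ 2)) * (SKG.pk P t u v * Real.exp (s *
            ∑ l, ((if u l = i then (1:ℝ) else 0) - P i (v l) / SKG.colSum P (v l)))) :=
          mul_le_mul_of_nonneg_left (mul_le_mul_of_nonneg_left hexp hpknn) (Real.exp_nonneg _)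
      _ = Real.exp (-(4 * t * δ ^ 2)) * ∏ l, g l (u l) := by rw [hprod]
  calc ∑ u ∈ S, SKG.pk P t u v
      ≤ ∑ u ∈ S, Real.exp (-(4 * t * δ ^ 2)) * ∏ l, g l (u l) := Finset.sum_le_sum step1
    _ = Real.exp (-(4 * t * δ ^ 2)) * ∑ u ∈ S, ∏ l, g l (u l) := by rw [Finset.mul_sum]
    _ ≤ Real.exp (-(4 * t * δ ^ 2)) * ∑ u : Fin t → Fin k, ∏ l, g l (u l) := by
        apply mul_le_mul_of_nonneg_left _ (Real.exp_nonneg _)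
        exact Finset.sum_le_sum_of_subset_of_nonneg (Finset.subset_univ S)
          (fun u _ _ => Finset.prod_nonneg fun l _ => hgnn l (u l))
    _ = Real.exp (-(4 * t * δ ^ 2)) * ∏ l, ∑ j, g l j := by rw [Fintype.prod_sum]
    _ ≤ Real.exp (-(4 * t * δ ^ 2)) *
        ∏ l, SKG.colSum P (v l) * Real.exp (s ^ 2 / 8) := by
        apply mul_le_mul_of_nonneg_left _ (Real.exp_nonneg _)
        apply Finset.prod_le_prod
        · exact fun l _ => Finset.sum_nonneg fun j _ => hgnn l j
        · exact fun l _ => skg_colfactor P h01 hpos i (v l) s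
    _ = (∏ l, SKG.colSum P (v l)) * Real.exp (-2 * δ ^ 2 * t) := by
        rw [Finset.prod_mul_distrib, Finset.prod_const, Finset.card_univ, Fintype.card_fin,
          ← Real.exp_nat_mul, ← mul_assoc, mul_comm (Real.exp _), mul_assoc, ← Real.exp_add]
        congr 1
        have h8 : s ^ 2 / 8 = 2 * δ ^ 2 := by rw [hs]; ring
        rw [h8]
        push_cast
        ring
end aux


lemma skg_fiber {k t : ℕ} (v : Fin t → Fin k) (h : Fin k → ℝ) :
    ∑ l, h (v l) = ∑ j, ((Finset.univ.filter fun l => v l = j).card : ℝ) * h j := by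
  rw [← Finset.sum_fiberwise' Finset.univ v h]
  exact Finset.sum_congr rfl fun j _ => by rw [Finset.sum_const, nsmul_eq_mul]

lemma skg_cnt {k t : ℕ} (u : Fin t → Fin k) (i : Fin k) :
    ∑ l, (if u l = i then (1:ℝ) else 0) = ((Finset.univ.filter fun l => u l = i).card : ℝ) := by
  simp [Finset.sum_boole]


/-- If `v ∈ [k]^t` has signature `σ` with `⟨σ, L⟩ > 0` and
`d = e^{⟨σ,L⟩}`, then for every `δ > 0` the total weight (in `W^{⊗t}`) of neighbors `u`
of `v` with `‖σ(u) − σM‖_∞ ≤ δ` is at least `d^t (1 − 2k e^{−2δ²t})`. -/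
theorem stmt6 (k t : ℕ) (P : Matrix (Fin k) (Fin k) ℝ) (hsymm : P.IsSymm)
    (h01 : ∀ i j, P i j ∈ Set.Icc (0 : ℝ) 1)
    (hpos : ∀ j, 0 < SKG.colSum P j) (hmono : Monotone (SKG.colSum P))
    (v : Fin t → Fin k) (hv : 0 < SKG.ip (SKG.sig t v) (SKG.LW P))
    (δ : ℝ) (hδ : 0 < δ) :
    Real.exp (SKG.ip (SKG.sig t v) (SKG.LW P)) ^ t *
        (1 - 2 * k * Real.exp (-2 * δ ^ 2 * t)) ≤
      ∑ u ∈ Finset.univ.filter (fun u : Fin t → Fin k =>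
          ‖SKG.sig t u - Matrix.vecMul (SKG.sig t v) (SKG.MW P)‖ ≤ δ),
        SKG.pk P t u v := by
  have htpos : 0 < t := by
    rcases Nat.eq_zero_or_pos t with ht | ht
    · subst ht
      simp [SKG.ip, SKG.sig] at hv
    · exact ht
  have ht' : (0:ℝ) < (t:ℝ) := Nat.cast_pos.2 htpos
  set D := ∏ l, SKG.colSum P (v l) with hDdef
  have hDpos : 0 < D := Finset.prod_pos fun l _ => hpos (v l)
  -- exp(ip)^t = D
  have hD_exp : Real.exp (SKG.ip (SKG.sig t v) (SKG.LW P)) ^ t = D := by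
    rw [← Real.exp_nat_mul]
    have h1 : (t:ℝ) * SKG.ip (SKG.sig t v) (SKG.LW P)
        = ∑ l, SKG.LW P (v l) := by
      rw [skg_fiber v (SKG.LW P), SKG.ip, Finset.mul_sum]
      refine Finset.sum_congr rfl fun j _ => ?_
      rw [SKG.sig]
      field_simp
    rw [h1, Real.exp_sum, hDdef]
    exact Finset.prod_congr rfl fun l _ => Real.exp_log (hpos (v l))
  -- total
  have htotal : ∑ u : Fin t → Fin k, SKG.pk P t u v = D := by
    rw [hDdef]
    unfold SKG.pk SKG.colSum
    rw [Fintype.prod_sum]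
  have hpknn : ∀ u : Fin t → Fin k, 0 ≤ SKG.pk P t u v :=
    fun u => Finset.prod_nonneg fun l _ => (h01 _ _).1
  set m := Matrix.vecMul (SKG.sig t v) (SKG.MW P) with hm
  -- Q identity
  have hQ : ∀ i, ∑ l, P i (v l) / SKG.colSum P (v l) = (t:ℝ) * m i := by
    intro i
    rw [skg_fiber v (fun j => P i j / SKG.colSum P j)]
    rw [hm]
    have hmi : Matrix.vecMul (SKG.sig t v) (SKG.MW P) i
        = ∑ j, SKG.sig t v j * (P j i / SKG.colSum P j) := by
      simp [Matrix.vecMul, dotProduct, SKG.MW]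
    rw [hmi, Finset.mul_sum]
    have hcancel : ∀ x y : ℝ, (t:ℝ) * (y / t * x) = y * x := fun x y => by
      rw [← mul_assoc, mul_comm ((t:ℝ)) (y / t), div_mul_cancel₀ y ht'.ne']
    refine Finset.sum_congr rfl fun j _ => ?_
    rw [SKG.sig, hsymm.apply i j, hcancel]
  set good := Finset.univ.filter (fun u : Fin t → Fin k =>
    ‖SKG.sig t u - m‖ ≤ δ) with hgood
  set bad := Finset.univ.filter (fun u : Fin t → Fin k =>
    ¬ ‖SKG.sig t u - m‖ ≤ δ) with hbad
  have hsplit : (∑ u ∈ good, SKG.pk P t u v) + ∑ u ∈ bad, SKG.pk P t u v = D := by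
    rw [hgood, hbad, Finset.sum_filter_add_sum_filter_not, htotal]
  set Up : Fin k → Finset (Fin t → Fin k) := fun i => Finset.univ.filter (fun u =>
    4 * t * δ ^ 2 ≤ (4*δ) *
      ∑ l, ((if u l = i then (1:ℝ) else 0) - P i (v l) / SKG.colSum P (v l))) with hUp
  set Lo : Fin k → Finset (Fin t → Fin k) := fun i => Finset.univ.filter (fun u =>
    4 * t * δ ^ 2 ≤ (-(4*δ)) *
      ∑ l, ((if u l = i then (1:ℝ) else 0) - P i (v l) / SKG.colSum P (v l))) with hLo
  have hsum_sub : ∀ (u : Fin t → Fin k) i,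
      ∑ l, ((if u l = i then (1:ℝ) else 0) - P i (v l) / SKG.colSum P (v l))
      = ((Finset.univ.filter fun l => u l = i).card : ℝ) - (t:ℝ) * m i := by
    intro u i
    rw [Finset.sum_sub_distrib, skg_cnt, hQ]
  have hbad_sub : bad ⊆ Finset.univ.biUnion (fun i => Up i ∪ Lo i) := by
    intro u hu
    rw [hbad, Finset.mem_filter] at hu
    have hex : ∃ i, δ < |SKG.sig t u i - m i| := by
      by_contra hc
      push_neg at hc
      exact hu.2 ((pi_norm_le_iff_of_nonneg hδ.le).2 fun i => by
        rw [Pi.sub_apply, Real.norm_eq_abs]; exact hc i)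
    obtain ⟨i, hi⟩ := hex
    rw [Finset.mem_biUnion]
    refine ⟨i, Finset.mem_univ i, ?_⟩
    have hsigu : SKG.sig t u i = ((Finset.univ.filter fun l => u l = i).card : ℝ) / t := rfl
    set C := ((Finset.univ.filter fun l => u l = i).card : ℝ) with hC
    rcases lt_abs.1 hi with h | h
    · refine Finset.mem_union_left _ ?_
      rw [hUp, Finset.mem_filter]
      refine ⟨Finset.mem_univ u, ?_⟩
      rw [hsum_sub u i]
      rw [hsigu] at h
      have hCt : C / t * t = C := div_mul_cancel₀ C ht'.ne'
      have h3 := mul_lt_mul_of_pos_right (show δ + m i < C / t by linarith) ht'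
      rw [hCt] at h3
      have h2 : δ * t < C - t * m i := by nlinarith
      nlinarith
    · refine Finset.mem_union_right _ ?_
      rw [hLo, Finset.mem_filter]
      refine ⟨Finset.mem_univ u, ?_⟩
      rw [hsum_sub u i]
      rw [hsigu] at h
      have hCt : C / t * t = C := div_mul_cancel₀ C ht'.ne'
      have h3 := mul_lt_mul_of_pos_right (show δ + C / t < m i by linarith) ht'
      have h4 : (δ + C / t) * t = δ * t + C := by rw [add_mul, hCt]
      have h2 : δ * t < t * m i - C := by nlinarith
      nlinarith
  have hUpLe : ∀ i, ∑ u ∈ Up i, SKG.pk P t u v ≤ D * Real.exp (-2 * δ ^ 2 * t) := by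
    intro i
    refine skg_tail P h01 hpos v i (4*δ) δ (by ring) (Up i) ?_
    intro u hu
    rw [hUp, Finset.mem_filter] at hu
    exact hu.2
  have hLoLe : ∀ i, ∑ u ∈ Lo i, SKG.pk P t u v ≤ D * Real.exp (-2 * δ ^ 2 * t) := by
    intro i
    refine skg_tail P h01 hpos v i (-(4*δ)) δ (by ring) (Lo i) ?_
    intro u hu
    rw [hLo, Finset.mem_filter] at hu
    exact hu.2
  have hbadle : ∑ u ∈ bad, SKG.pk P t u v ≤ 2 * k * D * Real.exp (-2 * δ ^ 2 * t) := by
    calc ∑ u ∈ bad, SKG.pk P t u v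
        ≤ ∑ u ∈ Finset.univ.biUnion (fun i => Up i ∪ Lo i), SKG.pk P t u v :=
          Finset.sum_le_sum_of_subset_of_nonneg hbad_sub (fun u _ _ => hpknn u)
      _ ≤ ∑ i : Fin k, ∑ u ∈ Up i ∪ Lo i, SKG.pk P t u v :=
          skg_sum_biUnion_le hpknn _ _
      _ ≤ ∑ i : Fin k, 2 * (D * Real.exp (-2 * δ ^ 2 * t)) := by
          refine Finset.sum_le_sum fun i _ => ?_
          have h1 := Finset.sum_union_inter (s₁ := Up i) (s₂ := Lo i)
            (f := fun u => SKG.pk P t u v)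
          have h2 : 0 ≤ ∑ u ∈ Up i ∩ Lo i, SKG.pk P t u v :=
            Finset.sum_nonneg fun u _ => hpknn u
          have := hUpLe i
          have := hLoLe i
          linarith
      _ = 2 * k * D * Real.exp (-2 * δ ^ 2 * t) := by
          rw [Finset.sum_const, Finset.card_univ, Fintype.card_fin, nsmul_eq_mul]
          ring
  rw [hD_exp]
  have hfinal : D * (1 - 2 * k * Real.exp (-2 * δ ^ 2 * t))
      = D - 2 * k * D * Real.exp (-2 * δ ^ 2 * t) := by ring
  have hgoal : (∑ u ∈ good, SKG.pk P t u v) = D - ∑ u ∈ bad, SKG.pk P t u v := by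
    linarith
  rw [hgood] at hgoal
  rw [hgoal]
  linarith
end
end

section
/- Let P ∈ [0,1]^{k×k} be symmetric with positive column sums c_1 ≤ ⋯ ≤ c_k such that W is connected and non-bipartite, and suppose ∑_i c_i ln(c_i) > 0. Let ε > 0 satisfy ε < (∑_i c_i ln c_i)/(∑_i c_i ln c_i − vol(W) ln c_1) in case ∑_i c_i ln c_i ≠ vol(W) ln c_1 (and let ε > 0 be arbitrary otherwise). Set d = c_1^ε (c_1^{c_1} c_2^{c_2} ⋯ c_k^{c_k})^{(1−ε)/vol(W)}. Then d > 1, and for every t and every v ∈ S_ε, deg_{W^{⊗t}}(v) = ∏_{i=1}^k c_i^{t σ_i(v)} ≥ d^t. -/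
open Finset MeasureTheory
open scoped Classical ENNReal

noncomputable section

/-- Assume `W` connected and non-bipartite, `∑ cᵢ ln cᵢ > 0`, and `ε > 0`
with `ε < (∑ cᵢ ln cᵢ)/(∑ cᵢ ln cᵢ − vol(W) ln c₁)` whenever `∑ cᵢ ln cᵢ ≠ vol(W) ln c₁`.
Then `d = c₁^ε (∏ cᵢ^{cᵢ})^{(1−ε)/vol(W)} > 1`, and for every `t` and every `v ∈ S_ε`,
`deg_{W^{⊗t}}(v) = ∏ cᵢ^{t σᵢ(v)} ≥ d^t`. -/
theorem stmt10 (k : ℕ) (hk : 0 < k) (P : Matrix (Fin k) (Fin k) ℝ) (hsymm : P.IsSymm)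
    (h01 : ∀ i j, P i j ∈ Set.Icc (0 : ℝ) 1)
    (hpos : ∀ j, 0 < SKG.colSum P j) (hmono : Monotone (SKG.colSum P))
    (hconn : SKG.connectedW P) (hnb : SKG.nonBipartiteW P)
    (hsum : 0 < ∑ i, SKG.colSum P i * Real.log (SKG.colSum P i))
    (ε : ℝ) (hε : 0 < ε)
    (hεlt : (∑ i, SKG.colSum P i * Real.log (SKG.colSum P i)) ≠
        SKG.volW P * Real.log (SKG.colSum P ⟨0, hk⟩) →
      ε < (∑ i, SKG.colSum P i * Real.log (SKG.colSum P i)) /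
        ((∑ i, SKG.colSum P i * Real.log (SKG.colSum P i)) -
          SKG.volW P * Real.log (SKG.colSum P ⟨0, hk⟩)))
    (d : ℝ)
    (hd : d = SKG.colSum P ⟨0, hk⟩ ^ ε *
        (∏ i, SKG.colSum P i ^ SKG.colSum P i) ^ ((1 - ε) / SKG.volW P)) :
    1 < d ∧ ∀ t : ℕ, ∀ v ∈ SKG.Sset P ε t,
      (d : ℝ) ^ (t : ℕ) ≤ ∏ i, SKG.colSum P i ^ ((t : ℝ) * SKG.sig t v i) := by

  classical
  set c : Fin k → ℝ := SKG.colSum P with hcdef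
  set V : ℝ := SKG.volW P with hVdef
  set A : ℝ := ∑ i, c i * Real.log (c i) with hAdef
  set i0 : Fin k := ⟨0, hk⟩ with hi0
  have hcpos : ∀ i, 0 < c i := hpos
  have hc0 : 0 < c i0 := hpos i0
  have hc0le : ∀ i, c i0 ≤ c i := fun i => hmono (by simp [Fin.le_def, hi0])
  have hlogle : ∀ i, Real.log (c i0) ≤ Real.log (c i) :=
    fun i => Real.log_le_log hc0 (hc0le i)
  have hV : ∑ i, c i = V := rfl
  have hVpos : 0 < V := by
    rw [← hV]
    exact Finset.sum_pos (fun i _ => hcpos i) (Finset.univ_nonempty_iff.2 ⟨i0⟩)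
  have hApos : 0 < A := hsum
  have hprodpos : 0 < ∏ i, c i ^ c i :=
    Finset.prod_pos fun i _ => Real.rpow_pos_of_pos (hcpos i) _
  have hdpos : 0 < d := by
    rw [hd]
    exact mul_pos (Real.rpow_pos_of_pos hc0 _) (Real.rpow_pos_of_pos hprodpos _)
  have hlogd : Real.log d = ε * Real.log (c i0) + (1 - ε) / V * A := by
    rw [hd, Real.log_mul (ne_of_gt (Real.rpow_pos_of_pos hc0 _))
      (ne_of_gt (Real.rpow_pos_of_pos hprodpos _)), Real.log_rpow hc0,
      Real.log_rpow hprodpos,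
      Real.log_prod (fun i _ => ne_of_gt (Real.rpow_pos_of_pos (hcpos i) _))]
    have : ∑ i, Real.log (c i ^ c i) = A := by
      rw [hAdef]
      exact Finset.sum_congr rfl fun i _ => by rw [Real.log_rpow (hcpos i)]
    rw [this]
  have hBA : V * Real.log (c i0) ≤ A := by
    have : ∑ i, c i * Real.log (c i0) ≤ A := by
      rw [hAdef]
      exact Finset.sum_le_sum fun i _ =>
        mul_le_mul_of_nonneg_left (hlogle i) (le_of_lt (hcpos i))
    calc V * Real.log (c i0) = ∑ i, c i * Real.log (c i0) := by
          rw [← hV, Finset.sum_mul]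
      _ ≤ A := this
  have hlogdpos : 0 < Real.log d := by
    by_cases hAB : A = V * Real.log (c i0)
    · have hL0 : 0 < Real.log (c i0) := by
        by_contra h
        push_neg at h
        nlinarith
      have : (1 - ε) / V * A = (1 - ε) * Real.log (c i0) := by
        rw [hAB]; field_simp
      rw [hlogd, this]
      nlinarith
    · have hlt : ε < A / (A - V * Real.log (c i0)) := hεlt hAB
      have hABpos : 0 < A - V * Real.log (c i0) := lt_of_le_of_ne (by linarith) (by
        intro h; exact hAB (by linarith))
      have h1 : ε * (A - V * Real.log (c i0)) < A := (lt_div_iff₀ hABpos).mp hlt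
      have h2 : Real.log d * V = ε * (V * Real.log (c i0)) + (1 - ε) * A := by
        rw [hlogd]; field_simp
      have h3 : 0 < Real.log d * V := by rw [h2]; nlinarith
      nlinarith
  have hd1 : 1 < d := by
    calc (1 : ℝ) = Real.exp 0 := Real.exp_zero.symm
      _ < Real.exp (Real.log d) := Real.exp_lt_exp.2 hlogdpos
      _ = d := Real.exp_log hdpos
  refine ⟨hd1, fun t v hv => ?_⟩
  rcases Nat.eq_zero_or_pos t with ht0 | ht0
  · subst ht0
    simp
  have htR : (0 : ℝ) < (t : ℝ) := by exact_mod_cast ht0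
  have hσsum : ∑ i, SKG.sig t v i = 1 := by
    have hcard : ∑ i : Fin k,
        ((Finset.univ.filter fun l => v l = i).card : ℝ) = (t : ℝ) := by
      rw [← Nat.cast_sum]
      congr 1
      rw [← Finset.card_eq_sum_card_fiberwise (fun l _ => Finset.mem_univ (v l))]
      simp
    simp only [SKG.sig]
    rw [← Finset.sum_div, hcard, div_self (ne_of_gt htR)]
  have key : Real.log d ≤ ∑ i, SKG.sig t v i * Real.log (c i) := by
    have hterm : ∀ i : Fin k,
        (1 - ε) * (c i / V) * Real.log (c i)
          + (SKG.sig t v i - (1 - ε) * (c i / V)) * Real.log (c i0)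
          ≤ SKG.sig t v i * Real.log (c i) := by
      intro i
      have hδ : 0 ≤ SKG.sig t v i - (1 - ε) * (c i / V) := le_of_lt (by
        have := hv i
        change (1 - ε) * (c i / V) < SKG.sig t v i at this
        linarith [this])
      nlinarith [mul_le_mul_of_nonneg_left (hlogle i) hδ]
    have e1 : ∑ i, (1 - ε) * (c i / V) * Real.log (c i) = (1 - ε) / V * A := by
      rw [hAdef, Finset.mul_sum]
      exact Finset.sum_congr rfl fun i _ => by
        field_simp
    have e2 : ∑ i, (SKG.sig t v i - (1 - ε) * (c i / V)) * Real.log (c i0)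
        = ε * Real.log (c i0) := by
      rw [← Finset.sum_mul]
      congr 1
      rw [Finset.sum_sub_distrib, hσsum]
      have : ∑ i, (1 - ε) * (c i / V) = 1 - ε := by
        rw [← Finset.mul_sum, ← Finset.sum_div, hV, div_self (ne_of_gt hVpos), mul_one]
      rw [this]; ring
    calc Real.log d = ε * Real.log (c i0) + (1 - ε) / V * A := hlogd
      _ = ∑ i, ((1 - ε) * (c i / V) * Real.log (c i)
            + (SKG.sig t v i - (1 - ε) * (c i / V)) * Real.log (c i0)) := by
          rw [Finset.sum_add_distrib, e1, e2]; ring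
      _ ≤ ∑ i, SKG.sig t v i * Real.log (c i) :=
          Finset.sum_le_sum fun i _ => hterm i
  have hrhs : ∏ i, c i ^ ((t : ℝ) * SKG.sig t v i)
      = Real.exp (∑ i, Real.log (c i) * ((t : ℝ) * SKG.sig t v i)) := by
    rw [Real.exp_sum]
    exact Finset.prod_congr rfl fun i _ => Real.rpow_def_of_pos (hcpos i) _
  have hlhs : d ^ (t : ℕ) = Real.exp ((t : ℝ) * Real.log d) := by
    rw [Real.exp_nat_mul, Real.exp_log hdpos]
  rw [hlhs, hrhs]
  apply Real.exp_le_exp.2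
  have : ∑ i, Real.log (c i) * ((t : ℝ) * SKG.sig t v i)
      = (t : ℝ) * ∑ i, SKG.sig t v i * Real.log (c i) := by
    rw [Finset.mul_sum]
    exact Finset.sum_congr rfl fun i _ => by ring
  rw [this]
  exact mul_le_mul_of_nonneg_left key (le_of_lt htR)
end
end

section
/- Let P ∈ [0,1]^{k×k} be symmetric with column sums c_1 ≤ ⋯ ≤ c_k such that W is connected and non-bipartite, and suppose ∏_{i=1}^k c_i < 1. Then there exist δ ∈ (0,1), constants C > 0, c > 0 and t_0 such that for all t ≥ t_0, with probability at least 1 − C e^{−c n^δ}, the t-th order stochastic Kronecker graph G generated by P has at least n − C n^δ isolated vertices (vertices of degree 0), where n = k^t. -/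
open Finset MeasureTheory
open scoped Classical ENNReal

noncomputable section

/-! ### Auxiliary lemmas -/

lemma aux_sum_image_le {α β : Type*} [DecidableEq β] (s : Finset α) (f : α → β)
    (q : β → ℝ) (hq : ∀ b, 0 ≤ q b) :
    ∑ b ∈ s.image f, q b ≤ ∑ a ∈ s, q (f a) := by
  induction s using Finset.cons_induction with
  | empty => simp
  | cons a s ha ih =>
    rw [Finset.cons_eq_insert, Finset.image_insert, Finset.sum_insert ha]
    by_cases hfa : f a ∈ s.image f
    · rw [Finset.insert_eq_self.mpr hfa]
      have := hq (f a)
      linarith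
    · rw [Finset.sum_insert hfa]
      exact add_le_add (le_refl _) ih

lemma aux_pow_le_factorial : ∀ m : ℕ, (m : ℝ) ^ m ≤ 3 ^ m * (m.factorial : ℝ) := by
  intro m
  induction m with
  | zero => norm_num
  | succ m ih =>
    rcases Nat.eq_zero_or_pos m with hm | hm
    · subst hm; norm_num
    have hm0 : (0:ℝ) < m := by exact_mod_cast hm
    have key : ((m:ℝ) + 1) ^ m ≤ 3 * (m:ℝ) ^ m := by
      have h1 : ((m:ℝ) + 1) = (m:ℝ) * (1 + 1/(m:ℝ)) := by field_simp
      have h2 : (1 + 1/(m:ℝ)) ≤ Real.exp (1/(m:ℝ)) := by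
        have := Real.add_one_le_exp (1/(m:ℝ)); linarith
      have h3 : (1 + 1/(m:ℝ)) ^ m ≤ Real.exp (1/(m:ℝ)) ^ m := by
        apply pow_le_pow_left₀ (by positivity) h2
      have h4 : Real.exp (1/(m:ℝ)) ^ m = Real.exp ((m:ℝ) * (1/(m:ℝ))) := by
        rw [Real.exp_nat_mul]
      have h5 : (m:ℝ) * (1/(m:ℝ)) = 1 := by field_simp
      have h6 : (1 + 1/(m:ℝ)) ^ m ≤ 3 := by
        rw [h4, h5] at h3
        have := Real.exp_one_lt_d9
        nlinarith
      calc ((m:ℝ) + 1) ^ m = (m:ℝ)^m * (1 + 1/(m:ℝ))^m := by rw [h1, mul_pow]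
        _ ≤ (m:ℝ)^m * 3 := by
            apply mul_le_mul_of_nonneg_left h6 (by positivity)
        _ = 3 * (m:ℝ)^m := by ring
    have hfac : (Nat.factorial (m+1) : ℝ) = ((m:ℝ)+1) * (m.factorial : ℝ) := by
      rw [Nat.factorial_succ]; push_cast; ring
    have hstep : ((m:ℝ) + 1) ^ (m+1) = ((m:ℝ)+1) * ((m:ℝ)+1)^m := by ring
    push_cast
    rw [hstep, hfac]
    calc ((m:ℝ)+1) * ((m:ℝ)+1)^m ≤ ((m:ℝ)+1) * (3 * (m:ℝ)^m) := by
          apply mul_le_mul_of_nonneg_left key (by positivity)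
      _ ≤ ((m:ℝ)+1) * (3 * (3^m * (m.factorial : ℝ))) := by
          apply mul_le_mul_of_nonneg_left (by nlinarith) (by positivity)
      _ = 3^(m+1) * (((m:ℝ)+1) * (m.factorial:ℝ)) := by ring

lemma aux_esymm_step {α : Type*} [DecidableEq α] (s : Finset α) (p : α → ℝ)
    (hp : ∀ e, 0 ≤ p e) (m : ℕ) :
    ((m:ℝ)+1) * ∑ F ∈ s.powersetCard (m+1), ∏ e ∈ F, p e ≤
      (∑ F ∈ s.powersetCard m, ∏ e ∈ F, p e) * ∑ e ∈ s, p e := by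
  have hLHS : ((m:ℝ)+1) * ∑ F ∈ s.powersetCard (m+1), ∏ e ∈ F, p e
      = ∑ F ∈ s.powersetCard (m+1), ∑ x ∈ F, p x * ∏ e ∈ F.erase x, p e := by
    rw [Finset.mul_sum]
    apply Finset.sum_congr rfl
    intro F hF
    rw [Finset.mem_powersetCard] at hF
    have hcard : (F.card : ℝ) = (m:ℝ)+1 := by rw [hF.2]; push_cast; ring
    calc ((m:ℝ)+1) * ∏ e ∈ F, p e = ∑ _x ∈ F, ∏ e ∈ F, p e := by
          rw [Finset.sum_const, nsmul_eq_mul, hcard]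
      _ = ∑ x ∈ F, p x * ∏ e ∈ F.erase x, p e := by
          apply Finset.sum_congr rfl
          intro x hx
          rw [Finset.mul_prod_erase F p hx]
  rw [hLHS]
  have hkey : ∑ F ∈ s.powersetCard (m+1), ∑ x ∈ F, p x * ∏ e ∈ F.erase x, p e
      = ∑ G ∈ s.powersetCard m, ∑ x ∈ s \ G, p x * ∏ e ∈ G, p e := by
    rw [Finset.sum_sigma' (s.powersetCard (m+1)) (fun F => F)
      (fun F x => p x * ∏ e ∈ F.erase x, p e)]
    rw [Finset.sum_sigma' (s.powersetCard m) (fun G => s \ G)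
      (fun G x => p x * ∏ e ∈ G, p e)]
    apply Finset.sum_nbij' (fun a => ⟨a.1.erase a.2, a.2⟩) (fun b => ⟨insert b.2 b.1, b.2⟩)
    · rintro ⟨F, x⟩ ha
      simp only [Finset.mem_sigma, Finset.mem_powersetCard] at ha ⊢
      obtain ⟨⟨hFs, hFc⟩, hx⟩ := ha
      refine ⟨⟨(Finset.erase_subset _ _).trans hFs, ?_⟩, ?_⟩
      · rw [Finset.card_erase_of_mem hx, hFc]; omega
      · simp only [Finset.mem_sdiff]
        exact ⟨hFs hx, Finset.notMem_erase _ _⟩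
    · rintro ⟨G, x⟩ hb
      simp only [Finset.mem_sigma, Finset.mem_powersetCard, Finset.mem_sdiff] at hb ⊢
      obtain ⟨⟨hGs, hGc⟩, hxs, hxG⟩ := hb
      refine ⟨⟨?_, ?_⟩, Finset.mem_insert_self _ _⟩
      · exact Finset.insert_subset hxs hGs
      · rw [Finset.card_insert_of_notMem hxG, hGc]
    · rintro ⟨F, x⟩ ha
      simp only [Finset.mem_sigma] at ha
      simp [Finset.insert_erase ha.2]
    · rintro ⟨G, x⟩ hb
      simp only [Finset.mem_sigma, Finset.mem_sdiff] at hb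
      simp [Finset.erase_insert hb.2.2]
    · rintro ⟨F, x⟩ ha
      simp only [Finset.mem_sigma] at ha
      simp
  rw [hkey, Finset.sum_mul]
  apply Finset.sum_le_sum
  intro G hG
  rw [Finset.mem_powersetCard] at hG
  have hcomm : (∏ e ∈ G, p e) * ∑ e ∈ s, p e = ∑ x ∈ s, p x * ∏ e ∈ G, p e := by
    rw [Finset.mul_sum]; apply Finset.sum_congr rfl; intros; ring
  rw [hcomm]
  apply Finset.sum_le_sum_of_subset_of_nonneg (Finset.sdiff_subset)
  intro x _ _
  exact mul_nonneg (hp x) (Finset.prod_nonneg fun e _ => hp e)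

lemma aux_esymm_le {α : Type*} [DecidableEq α] (s : Finset α) (p : α → ℝ)
    (hp : ∀ e, 0 ≤ p e) :
    ∀ m : ℕ, (m.factorial : ℝ) * ∑ F ∈ s.powersetCard m, ∏ e ∈ F, p e ≤ (∑ e ∈ s, p e) ^ m := by
  intro m
  induction m with
  | zero => simp
  | succ m ih =>
    have hfac : (Nat.factorial (m+1) : ℝ) = ((m:ℝ)+1) * (m.factorial : ℝ) := by
      rw [Nat.factorial_succ]; push_cast; ring
    have hsum0 : (0:ℝ) ≤ ∑ e ∈ s, p e := Finset.sum_nonneg fun e _ => hp e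
    calc (Nat.factorial (m+1) : ℝ) * ∑ F ∈ s.powersetCard (m+1), ∏ e ∈ F, p e
        = (m.factorial : ℝ) * (((m:ℝ)+1) * ∑ F ∈ s.powersetCard (m+1), ∏ e ∈ F, p e) := by
          rw [hfac]; ring
      _ ≤ (m.factorial : ℝ) * ((∑ F ∈ s.powersetCard m, ∏ e ∈ F, p e) * ∑ e ∈ s, p e) := by
          apply mul_le_mul_of_nonneg_left (aux_esymm_step s p hp m) (by positivity)
      _ = ((m.factorial : ℝ) * ∑ F ∈ s.powersetCard m, ∏ e ∈ F, p e) * ∑ e ∈ s, p e := by ring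
      _ ≤ (∑ e ∈ s, p e)^m * ∑ e ∈ s, p e := by
          apply mul_le_mul_of_nonneg_right ih hsum0
      _ = (∑ e ∈ s, p e)^(m+1) := by ring

lemma aux_exp_quad {x : ℝ} (hx : |x| ≤ 1) : Real.exp x ≤ 1 + x + x ^ 2 := by
  have h := Real.exp_bound hx (n := 2) (by norm_num)
  have hs : ∑ m ∈ Finset.range 2, x ^ m / (m.factorial : ℝ) = 1 + x := by
    simp [Finset.sum_range_succ]
  rw [hs] at h
  have h2 : |x| ^ 2 = x ^ 2 := sq_abs x
  rw [h2] at h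
  have h3 := abs_le.1 h
  norm_num at h3
  nlinarith [h3.2, sq_nonneg x]

lemma bern_true (p : ℝ) : SKG.bern p {true} = ENNReal.ofReal p := by
  simp [SKG.bern, Measure.dirac_apply]

lemma bern_univ {p : ℝ} (h0 : 0 ≤ p) (h1 : p ≤ 1) : SKG.bern p Set.univ = 1 := by
  simp only [SKG.bern, Measure.add_apply, Measure.smul_apply, measure_univ, smul_eq_mul, mul_one]
  rw [← ENNReal.ofReal_add h0 (by linarith), ← ENNReal.ofReal_one]
  norm_num

lemma symProb_eq {k : ℕ} (P : Matrix (Fin k) (Fin k) ℝ) (t : ℕ) (u v : Fin t → Fin k) :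
    SKG.symProb P t s(u, v) = ∏ l, (P (u l) (v l) + P (v l) (u l)) / 2 := by
  rw [SKG.symProb, Sym2.lift_mk]

lemma symProb_mem {k : ℕ} (P : Matrix (Fin k) (Fin k) ℝ) (h01 : ∀ i j, P i j ∈ Set.Icc (0:ℝ) 1)
    (t : ℕ) (e : Sym2 (Fin t → Fin k)) : SKG.symProb P t e ∈ Set.Icc (0:ℝ) 1 := by
  induction e using Sym2.ind with
  | _ u v =>
    rw [symProb_eq]
    constructor
    · apply Finset.prod_nonneg
      intro l _
      have h1 := h01 (u l) (v l); have h2 := h01 (v l) (u l)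
      simp only [Set.mem_Icc] at h1 h2
      linarith [h1.1, h2.1]
    · apply Finset.prod_le_one
      · intro l _
        have h1 := h01 (u l) (v l); have h2 := h01 (v l) (u l)
        simp only [Set.mem_Icc] at h1 h2
        linarith [h1.1, h2.1]
      · intro l _
        have h1 := h01 (u l) (v l); have h2 := h01 (v l) (u l)
        simp only [Set.mem_Icc] at h1 h2
        linarith [h1.2, h2.2]

lemma symProb_mk {k : ℕ} {P : Matrix (Fin k) (Fin k) ℝ} (hsymm : P.IsSymm) (t : ℕ)
    (u v : Fin t → Fin k) : SKG.symProb P t s(u, v) = ∏ l, P (u l) (v l) := by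
  rw [symProb_eq]
  apply Finset.prod_congr rfl
  intro l _
  rw [hsymm.apply (u l) (v l)]
  ring


set_option maxHeartbeats 2000000 in
/-- If `W` is connected and non-bipartite and `∏ cᵢ < 1`, then there are
`δ ∈ (0,1)`, `C > 0`, `c > 0` and `t₀` such that for all `t ≥ t₀`, with probability at
least `1 − C e^{−c n^δ}` the graph `G` has at least `n − C n^δ` isolated vertices,
where `n = k^t`. -/
theorem stmt13 (k : ℕ) (P : Matrix (Fin k) (Fin k) ℝ) (hsymm : P.IsSymm)
    (h01 : ∀ i j, P i j ∈ Set.Icc (0 : ℝ) 1)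
    (hmono : Monotone (SKG.colSum P))
    (hconn : SKG.connectedW P) (hnb : SKG.nonBipartiteW P)
    (hprod : ∏ i, SKG.colSum P i < 1) :
    ∃ δ ∈ Set.Ioo (0 : ℝ) 1, ∃ C > (0 : ℝ), ∃ c > (0 : ℝ), ∃ t₀ : ℕ, ∀ t ≥ t₀,
      ENNReal.ofReal (1 - C * Real.exp (-c * ((k : ℝ) ^ t) ^ δ)) ≤
        SKG.skg P t {ω |
          (k : ℝ) ^ t - C * ((k : ℝ) ^ t) ^ δ ≤
            (Set.ncard {v : Fin t → Fin k | ∀ u, ¬ (SKG.graphOf ω).Adj v u} : ℝ)} := by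
  classical
  -- dispose of k = 0
  rcases Nat.eq_zero_or_pos k with hk0 | hkpos
  · exfalso; subst hk0; simp at hprod
  rcases eq_or_lt_of_le (show 1 ≤ k from hkpos) with hk1 | hk2
  · -- k = 1 : n = 1 and the bound is vacuous
    refine ⟨1/2, by norm_num, 3, by norm_num, 1, one_pos, 0, fun t _ => ?_⟩
    have hk : (k:ℝ) = 1 := by rw [← hk1]; norm_num
    rw [hk, one_pow, Real.one_rpow]
    have he3 : Real.exp 1 ≤ 3 := by nlinarith [Real.exp_one_lt_d9]
    have hneg : (1:ℝ) - 3 * Real.exp (-1 * 1) ≤ 0 := by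
      have h1 : Real.exp (-1 * 1) = (Real.exp 1)⁻¹ := by
        rw [show (-1 * 1 : ℝ) = -1 by ring, Real.exp_neg]
      rw [h1]
      have hpos := Real.exp_pos 1
      have : Real.exp 1 * (Real.exp 1)⁻¹ = 1 := mul_inv_cancel₀ (ne_of_gt hpos)
      nlinarith
    rw [ENNReal.ofReal_of_nonpos hneg]
    exact zero_le
  -- main case : k ≥ 2
  have hkR : (2:ℝ) ≤ (k:ℝ) := by exact_mod_cast hk2
  have hkR1 : (1:ℝ) < (k:ℝ) := by linarith
  have hPnn : ∀ i j, 0 ≤ P i j := fun i j => (h01 i j).1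
  -- all column sums are positive
  have hc : ∀ i, 0 < SKG.colSum P i := by
    intro i
    obtain ⟨j, hj⟩ : ∃ j : Fin k, j ≠ i := by
      rcases eq_or_ne i ⟨0, hkpos⟩ with h | h
      · exact ⟨⟨1, hk2⟩, by rw [h]; simp [Fin.ext_iff]⟩
      · exact ⟨⟨0, hkpos⟩, Ne.symm h⟩
    rcases (hconn i j).cases_head with h | ⟨b, hb, _⟩
    · exact absurd h.symm hj
    · have h1 : P b i = P i b := hsymm.apply i b
      have h2 : P b i ≤ SKG.colSum P i :=
        Finset.single_le_sum (f := fun l => P l i) (fun l _ => hPnn l i) (Finset.mem_univ b)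
      rw [SKG.colSum] at h2 ⊢
      rw [h1] at h2
      linarith
  set S := ∑ i, Real.log (SKG.colSum P i) with hSdef
  have hS : S < 0 := by
    have hprodpos : 0 < ∏ i, SKG.colSum P i := Finset.prod_pos (fun i _ => hc i)
    have h1 : S = Real.log (∏ i, SKG.colSum P i) := by
      rw [hSdef]; exact (Real.log_prod (fun i _ => (hc i).ne')).symm
    rw [h1]
    exact Real.log_neg hprodpos hprod
  set M := ∑ i, |Real.log (SKG.colSum P i)| with hMdef
  have hM0 : 0 ≤ M := by
    rw [hMdef]; exact Finset.sum_nonneg fun i _ => abs_nonneg _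
  have hMb : ∀ i, |Real.log (SKG.colSum P i)| ≤ M := by
    intro i
    rw [hMdef]
    exact Finset.single_le_sum (f := fun i => |Real.log (SKG.colSum P i)|)
      (fun l _ => abs_nonneg _) (Finset.mem_univ i)
  set Q := ∑ i, (Real.log (SKG.colSum P i))^2 with hQdef
  have hQ0 : 0 ≤ Q := by
    rw [hQdef]; exact Finset.sum_nonneg fun i _ => sq_nonneg _
  have hnegS : 0 < -S := by linarith
  set lam := min (1/(M+1)) ((-S)/(2*Q+1)) with hlamdef
  have hlam_pos : 0 < lam := by
    rw [hlamdef]; exact lt_min (by positivity) (by positivity)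
  have hlam1 : lam ≤ 1 := by
    rw [hlamdef]
    refine le_trans (min_le_left _ _) ?_
    rw [div_le_one (by linarith)]
    linarith
  have hlamM : ∀ i, |lam * Real.log (SKG.colSum P i)| ≤ 1 := by
    intro i
    rw [abs_mul, abs_of_pos hlam_pos]
    have h1 : lam ≤ 1/(M+1) := by rw [hlamdef]; exact min_le_left _ _
    have h2 := hMb i
    calc lam * |Real.log (SKG.colSum P i)| ≤ (1/(M+1)) * (M+1) := by
          apply mul_le_mul h1 (by linarith) (abs_nonneg _) (by positivity)
      _ = 1 := by field_simp
  set β := ∑ i, (SKG.colSum P i) ^ lam with hβdef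
  have hβ0 : 0 < β := by
    rw [hβdef]
    apply Finset.sum_pos (fun i _ => Real.rpow_pos_of_pos (hc i) _)
    exact ⟨⟨0, hkpos⟩, Finset.mem_univ _⟩
  have hβlt : β < k := by
    have hterm : ∀ i, (SKG.colSum P i) ^ lam ≤
        1 + lam * Real.log (SKG.colSum P i) + (lam * Real.log (SKG.colSum P i))^2 := by
      intro i
      rw [Real.rpow_def_of_pos (hc i), mul_comm]
      exact aux_exp_quad (hlamM i)
    have hsum : β ≤ (k:ℝ) + lam * S + lam^2 * Q := by
      have h1 : β ≤ ∑ i, (1 + lam * Real.log (SKG.colSum P i)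
          + (lam * Real.log (SKG.colSum P i))^2) := by
        rw [hβdef]
        exact Finset.sum_le_sum (fun i _ => hterm i)
      refine le_trans h1 (le_of_eq ?_)
      rw [Finset.sum_add_distrib, Finset.sum_add_distrib, Finset.sum_const,
        Finset.card_univ, Fintype.card_fin]
      rw [hSdef, hQdef, Finset.mul_sum, Finset.mul_sum]
      simp only [nsmul_eq_mul, mul_one, mul_pow]
      try ring
    have h2 : lam ≤ (-S)/(2*Q+1) := by rw [hlamdef]; exact min_le_right _ _
    have h3 : lam * Q ≤ -S/2 := by
      calc lam * Q ≤ ((-S)/(2*Q+1)) * Q := mul_le_mul_of_nonneg_right h2 hQ0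
        _ ≤ -S/2 := by
            rw [div_mul_eq_mul_div, div_le_div_iff₀ (by positivity) (by norm_num)]
            nlinarith [hnegS, hQ0]
    have hp1 : lam * (lam * Q) ≤ lam * (-S/2) := mul_le_mul_of_nonneg_left h3 hlam_pos.le
    have hp2 : 0 < lam * -S := mul_pos hlam_pos hnegS
    linarith only [hsum, hp1, hp2]
  set K := Real.log k with hKdef
  have hK : 0 < K := Real.log_pos hkR1
  set B := Real.log β with hBdef
  have hBK : B < K := Real.log_lt_log hβ0 hβlt
  set ε := min (1/2 : ℝ) ((K - B)/(2*lam*K)) with hεdef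
  have hKB : 0 < K - B := by linarith
  have hε0 : 0 < ε := by rw [hεdef]; exact lt_min (by norm_num) (by positivity)
  have hε2 : ε ≤ 1/2 := by rw [hεdef]; exact min_le_left _ _
  set δ2 := 1 - ε with hδ2def
  have hδ2a : 1/2 ≤ δ2 := by rw [hδ2def]; linarith
  have hδ2b : δ2 < 1 := by rw [hδ2def]; linarith
  have hstep : lam * ((1 - δ2) * K) ≤ (K - B)/2 := by
    have h1 : (1 - δ2) = ε := by rw [hδ2def]; ring
    rw [h1]
    have h2 : ε ≤ (K-B)/(2*lam*K) := by rw [hεdef]; exact min_le_right _ _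
    calc lam * (ε * K) ≤ lam * (((K-B)/(2*lam*K)) * K) := by
          apply mul_le_mul_of_nonneg_left (mul_le_mul_of_nonneg_right h2 hK.le) hlam_pos.le
      _ = (K-B)/2 := by field_simp
  set δ1 := max δ2 ((K+B)/(2*K)) with hδ1def
  have hδ1a : δ2 ≤ δ1 := by rw [hδ1def]; exact le_max_left _ _
  have hδ1b : δ1 < 1 := by
    rw [hδ1def]
    apply max_lt hδ2b
    rw [div_lt_one (by positivity)]
    linarith
  have hδ1pos : 0 < δ1 := lt_of_lt_of_le (by norm_num : (0:ℝ) < 1/2) (le_trans hδ2a hδ1a)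
  have hδ1c : (K+B)/2 ≤ δ1 * K := by
    have h1 : (K+B)/(2*K) ≤ δ1 := by rw [hδ1def]; exact le_max_right _ _
    calc (K+B)/2 = ((K+B)/(2*K)) * K := by field_simp
      _ ≤ δ1 * K := mul_le_mul_of_nonneg_right h1 hK.le
  set δ := (1+δ1)/2 with hδdef
  have hδa : δ1 < δ := by rw [hδdef]; linarith
  have hδb : δ < 1 := by rw [hδdef]; linarith
  have hδ0 : 0 < δ := by rw [hδdef]; linarith
  clear_value S M Q lam β K B ε δ2 δ1 δ
  refine ⟨δ, ⟨hδ0, hδb⟩, 3, by norm_num, 1, one_pos, ⌈Real.log 9 / ((δ - δ1)*K)⌉₊ + 1, ?_⟩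
  intro t ht
  -- notation for the scale exp((t*K)*x)
  set E : ℝ → ℝ := fun x => Real.exp (((t:ℝ)*K) * x) with hEdef
  have hE0 : ∀ x, 0 < E x := by
    intro x; rw [hEdef]; exact Real.exp_pos _
  have hEmono : ∀ {x y : ℝ}, x ≤ y → E x ≤ E y := by
    intro x y hxy
    rw [hEdef]
    exact Real.exp_le_exp.mpr (mul_le_mul_of_nonneg_left hxy (by positivity))
  have hEmul : ∀ x y, E x * E y = E (x+y) := by
    intro x y
    rw [hEdef]
    dsimp only
    rw [← Real.exp_add]
    ring_nf
  have hkpow : ∀ x : ℝ, ((k:ℝ)^t) ^ x = E x := by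
    intro x
    rw [Real.rpow_def_of_pos (by positivity), Real.log_pow, hEdef, hKdef]
  have hn1 : ((k:ℝ)^t) = E 1 := by
    have h1 := hkpow 1
    rwa [Real.rpow_one] at h1
  -- the weight of a vertex
  set w : (Fin t → Fin k) → ℝ := fun u => ∏ l, SKG.colSum P (u l) with hwdef
  have hw0 : ∀ u, 0 < w u := fun u => Finset.prod_pos (fun l _ => hc (u l))
  set θ := E (δ2 - 1) with hθdef
  have hθ0 : 0 < θ := by rw [hθdef]; exact hE0 _
  set T := Finset.univ.filter (fun u => w u ≤ θ) with hTdef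
  set Tc := Finset.univ.filter (fun u => ¬ (w u ≤ θ)) with hTcdef
  -- total lam-moment
  have hwsum : ∑ u : (Fin t → Fin k), (w u) ^ lam = β ^ t := by
    have h1 : ∀ u : Fin t → Fin k, (w u)^lam = ∏ l, (SKG.colSum P (u l)) ^ lam := by
      intro u
      rw [hwdef]
      exact (Real.finset_prod_rpow _ _ (fun l _ => (hc (u l)).le) lam).symm
    simp only [h1]
    rw [← Fintype.prod_sum (fun (_ : Fin t) (j : Fin k) => (SKG.colSum P j) ^ lam)]
    rw [Finset.prod_const, Finset.card_univ, Fintype.card_fin, hβdef]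
  have hβt : β ^ t = Real.exp ((t:ℝ) * B) := by
    rw [hBdef, Real.exp_nat_mul, Real.exp_log hβ0]
  have ht0 : (0:ℝ) ≤ (t:ℝ) := Nat.cast_nonneg t
  -- counting atypical vertices
  have hTc_card : ((Tc.card : ℝ)) ≤ E δ1 := by
    have h1 : ((Tc.card : ℝ)) ≤ ∑ u ∈ Tc, ((w u)/θ)^lam := by
      rw [Finset.card_eq_sum_ones, Nat.cast_sum]
      apply Finset.sum_le_sum
      intro u hu
      rw [hTcdef, Finset.mem_filter] at hu
      have h2 : θ < w u := not_le.mp hu.2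
      push_cast
      exact Real.one_le_rpow ((one_le_div hθ0).mpr h2.le) hlam_pos.le
    have h2 : ∑ u ∈ Tc, ((w u)/θ)^lam ≤ ∑ u : Fin t → Fin k, ((w u)/θ)^lam := by
      apply Finset.sum_le_sum_of_subset_of_nonneg (Finset.subset_univ _)
      intro u _ _
      exact Real.rpow_nonneg (div_nonneg (hw0 u).le hθ0.le) lam
    have h3 : ∀ u, ((w u)/θ)^lam = (w u)^lam / θ^lam :=
      fun u => Real.div_rpow (hw0 u).le hθ0.le lam
    have h4 : ∑ u : Fin t → Fin k, ((w u)/θ)^lam = Real.exp ((t:ℝ)*B) / θ^lam := by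
      simp only [h3]
      rw [← Finset.sum_div, hwsum, hβt]
    have h5 : θ^lam = Real.exp ((((t:ℝ)*K) * (δ2-1)) * lam) := by
      rw [hθdef, hEdef]
      dsimp only
      rw [Real.rpow_def_of_pos (Real.exp_pos _), Real.log_exp]
    have h6 : Real.exp ((t:ℝ)*B) / θ^lam ≤ E δ1 := by
      rw [h5, ← Real.exp_sub, hEdef]
      dsimp only
      apply Real.exp_le_exp.mpr
      have e1 : (t:ℝ) * (lam*((1-δ2)*K)) ≤ (t:ℝ) * ((K-B)/2) :=
        mul_le_mul_of_nonneg_left hstep ht0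
      have e2 : (t:ℝ) * ((K+B)/2) ≤ (t:ℝ) * (δ1*K) :=
        mul_le_mul_of_nonneg_left hδ1c ht0
      linarith only [e1, e2]
    calc ((Tc.card : ℝ)) ≤ ∑ u ∈ Tc, ((w u)/θ)^lam := h1
      _ ≤ ∑ u : Fin t → Fin k, ((w u)/θ)^lam := h2
      _ = Real.exp ((t:ℝ)*B) / θ^lam := h4
      _ ≤ E δ1 := h6
  -- expected degree sum over typical vertices
  have hTsum : ∑ u ∈ T, w u ≤ E δ2 := by
    have h1 : ∑ u ∈ T, w u ≤ ∑ u ∈ T, θ := by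
      apply Finset.sum_le_sum
      intro u hu
      rw [hTdef, Finset.mem_filter] at hu
      exact hu.2
    have h2 : ∑ u ∈ T, θ = (T.card : ℝ) * θ := by
      rw [Finset.sum_const, nsmul_eq_mul]
    have h3 : (T.card : ℝ) ≤ E 1 := by
      rw [← hn1]
      have h4 : T.card ≤ k ^ t := by
        calc T.card ≤ Fintype.card (Fin t → Fin k) := Finset.card_le_univ T
          _ = k ^ t := by rw [Fintype.card_fun, Fintype.card_fin, Fintype.card_fin]
      calc (T.card : ℝ) ≤ ((k^t : ℕ) : ℝ) := Nat.cast_le.mpr h4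
        _ = (k:ℝ)^t := by push_cast; ring
    calc ∑ u ∈ T, w u ≤ (T.card : ℝ) * θ := h2 ▸ h1
      _ ≤ E 1 * θ := mul_le_mul_of_nonneg_right h3 hθ0.le
      _ = E δ2 := by
          rw [hθdef, hEmul]
          norm_num
  -- edges touching T
  set q : Sym2 (Fin t → Fin k) → ℝ := SKG.symProb P t with hqdef
  have hq01 : ∀ e, 0 ≤ q e ∧ q e ≤ 1 := by
    intro e
    have := symProb_mem P h01 t e
    rw [Set.mem_Icc] at this
    exact this
  set ET := Finset.univ.filter
    (fun e : Sym2 (Fin t → Fin k) => ¬ e.IsDiag ∧ ∃ x ∈ T, x ∈ e) with hETdef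
  have hqle : ∑ e ∈ ET, q e ≤ ∑ u ∈ T, w u := by
    have hsub : ET ⊆ (T ×ˢ Finset.univ).image (fun p : _ × _ => s(p.1, p.2)) := by
      intro e he
      rw [hETdef, Finset.mem_filter] at he
      obtain ⟨x, hxT, hxe⟩ := he.2.2
      refine Finset.mem_image.mpr ⟨(x, Sym2.Mem.other hxe),
        Finset.mem_product.mpr ⟨hxT, Finset.mem_univ _⟩, ?_⟩
      exact Sym2.other_spec hxe
    calc ∑ e ∈ ET, q e
        ≤ ∑ e ∈ (T ×ˢ Finset.univ).image (fun p : _ × _ => s(p.1, p.2)), q e :=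
          Finset.sum_le_sum_of_subset_of_nonneg hsub (fun e _ _ => (hq01 e).1)
      _ ≤ ∑ p ∈ T ×ˢ Finset.univ, q s(p.1, p.2) :=
          aux_sum_image_le _ _ _ (fun e => (hq01 e).1)
      _ = ∑ u ∈ T, ∑ v : Fin t → Fin k, q s(u, v) := by
          rw [Finset.sum_product]
      _ = ∑ u ∈ T, w u := by
          apply Finset.sum_congr rfl
          intro u _
          have h1 : ∀ v : Fin t → Fin k, q s(u,v) = ∏ l, P (u l) (v l) := by
            intro v
            rw [hqdef]
            exact symProb_mk hsymm t u v
          simp only [h1]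
          rw [← Fintype.prod_sum (fun (l : Fin t) (j : Fin k) => P (u l) j), hwdef]
          apply Finset.prod_congr rfl
          intro l _
          rw [SKG.colSum]
          apply Finset.sum_congr rfl
          intro j _
          exact (hsymm.apply (u l) j).symm
  set m := ⌈E δ⌉₊ with hmdef
  have hmE : E δ ≤ (m:ℝ) := by rw [hmdef]; exact Nat.le_ceil _
  have hmE2 : (m:ℝ) ≤ E δ + 1 := by
    rw [hmdef]; exact (Nat.ceil_lt_add_one (hE0 δ).le).le
  -- for t ≥ t₀, 9 E δ1 ≤ E δ
  have h9 : 9 * E δ1 ≤ E δ := by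
    have hx : Real.log 9 / ((δ - δ1)*K) ≤ (t:ℝ) := by
      have h1 : ((⌈Real.log 9 / ((δ - δ1)*K)⌉₊ + 1 : ℕ) : ℝ) ≤ (t:ℝ) := Nat.cast_le.mpr ht
      push_cast at h1
      have h2 : Real.log 9 / ((δ - δ1)*K) ≤ (⌈Real.log 9 / ((δ - δ1)*K)⌉₊ : ℝ) :=
        Nat.le_ceil _
      linarith only [h1, h2]
    have h3 : Real.log 9 ≤ (δ - δ1) * K * (t:ℝ) := by
      rw [div_le_iff₀ (mul_pos (sub_pos.mpr hδa) hK)] at hx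
      linarith only [hx]
    have h4 : (9:ℝ) = Real.exp (Real.log 9) := (Real.exp_log (by norm_num)).symm
    rw [h4, hEdef]
    dsimp only
    rw [← Real.exp_add]
    apply Real.exp_le_exp.mpr
    linarith only [h3]
  -- the bad event
  set Bad := {ω : Sym2 (Fin t → Fin k) → Bool |
    m ≤ (ET.filter (fun e => ω e = true)).card} with hBadDef
  have hBadMeas : MeasurableSet Bad := (Set.toFinite Bad).measurableSet
  have hskg_eq : SKG.skg P t = Measure.pi (fun e => SKG.bern (SKG.symProb P t e)) := rfl
  haveI hPM : ∀ e : Sym2 (Fin t → Fin k),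
      IsProbabilityMeasure (SKG.bern (SKG.symProb P t e)) :=
    fun e => ⟨bern_univ (hq01 e).1 (hq01 e).2⟩
  haveI hprob : IsProbabilityMeasure (SKG.skg P t) := by
    rw [hskg_eq]; infer_instance
  -- cylinder measure
  have hcyl : ∀ F : Finset (Sym2 (Fin t → Fin k)),
      (SKG.skg P t) (Set.univ.pi (fun e => if e ∈ F then ({true} : Set Bool) else Set.univ))
        = ENNReal.ofReal (∏ e ∈ F, q e) := by
    intro F
    rw [hskg_eq, Measure.pi_pi]
    have h1 : ∀ e : Sym2 (Fin t → Fin k),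
        (SKG.bern (SKG.symProb P t e)) (if e ∈ F then ({true}:Set Bool) else Set.univ)
        = if e ∈ F then ENNReal.ofReal (q e) else 1 := by
      intro e
      split
      · rw [hqdef]; exact bern_true _
      · exact bern_univ (hq01 e).1 (hq01 e).2
    simp only [h1]
    rw [Finset.prod_ite_mem Finset.univ F (fun e => ENNReal.ofReal (q e)),
      Finset.univ_inter, ENNReal.ofReal_prod_of_nonneg (fun e _ => (hq01 e).1)]
  -- union bound over cylinders
  have hBadSub : Bad ⊆ ⋃ F ∈ ET.powersetCard m,
      (Set.univ.pi (fun e => if e ∈ F then ({true}:Set Bool) else Set.univ)) := by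
    intro ω hω
    rw [hBadDef, Set.mem_setOf_eq] at hω
    obtain ⟨F, hFsub, hFcard⟩ := Finset.exists_subset_card_eq hω
    refine Set.mem_iUnion₂.mpr ⟨F, Finset.mem_powersetCard.mpr
      ⟨hFsub.trans (Finset.filter_subset _ _), hFcard⟩, ?_⟩
    intro e _
    by_cases heF : e ∈ F
    · simp only [heF, if_true]
      have h1 := hFsub heF
      rw [Finset.mem_filter] at h1
      exact h1.2
    · simp [heF]
  have hBad1 : (SKG.skg P t) Bad ≤ ENNReal.ofReal (Real.exp (- E δ)) := by
    have hq0 : ∀ e, 0 ≤ q e := fun e => (hq01 e).1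
    have hreal : ∑ F ∈ ET.powersetCard m, ∏ e ∈ F, q e ≤ Real.exp (- E δ) := by
      have hsq0 : (0:ℝ) ≤ ∑ e ∈ ET, q e := Finset.sum_nonneg fun e _ => hq0 e
      have e1 := aux_esymm_le ET q hq0 m
      have e2 : (∑ e ∈ ET, q e)^m ≤ (E δ1)^m := by
        apply pow_le_pow_left₀ hsq0
        calc ∑ e ∈ ET, q e ≤ ∑ u ∈ T, w u := hqle
          _ ≤ E δ2 := hTsum
          _ ≤ E δ1 := hEmono hδ1a
      have e3 : E δ1 ≤ (m:ℝ)/9 := by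
        rw [le_div_iff₀ (by norm_num : (0:ℝ) < 9)]
        linarith only [h9, hmE]
      have e4 : (E δ1)^m ≤ ((m:ℝ)/9)^m := pow_le_pow_left₀ (hE0 δ1).le e3 m
      have e5 : ((m:ℝ)/9)^m ≤ (m.factorial : ℝ) * (1/3)^m := by
        have h39 : (3:ℝ)^m * (1/9:ℝ)^m = (1/3:ℝ)^m := by
          rw [← mul_pow]; norm_num
        calc ((m:ℝ)/9)^m = (m:ℝ)^m * (1/9:ℝ)^m := by
              rw [show ((m:ℝ)/9) = (m:ℝ)*(1/9) by ring, mul_pow]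
          _ ≤ (3^m * (m.factorial:ℝ)) * (1/9:ℝ)^m := by
              apply mul_le_mul_of_nonneg_right (aux_pow_le_factorial m) (by positivity)
          _ = (m.factorial:ℝ) * ((3:ℝ)^m * (1/9:ℝ)^m) := by ring
          _ = (m.factorial:ℝ) * (1/3:ℝ)^m := by rw [h39]
      have hfac0 : (0:ℝ) < (m.factorial : ℝ) := by
        exact_mod_cast m.factorial_pos
      have e6 : ∑ F ∈ ET.powersetCard m, ∏ e ∈ F, q e ≤ (1/3:ℝ)^m := by
        have h7 : (m.factorial:ℝ) * ∑ F ∈ ET.powersetCard m, ∏ e ∈ F, q e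
            ≤ (m.factorial:ℝ) * (1/3)^m := by
          calc (m.factorial:ℝ) * ∑ F ∈ ET.powersetCard m, ∏ e ∈ F, q e
              ≤ (∑ e ∈ ET, q e)^m := e1
            _ ≤ (m.factorial : ℝ) * (1/3)^m := le_trans e2 (le_trans e4 e5)
        exact le_of_mul_le_mul_left h7 hfac0
      have e7 : (1/3:ℝ)^m ≤ Real.exp (-(m:ℝ)) := by
        have h8 : (1/3:ℝ) ≤ Real.exp (-1) := by
          have h12 : Real.exp 1 ≤ 3 := le_trans Real.exp_one_lt_d9.le (by norm_num)
          calc (1/3:ℝ) = 3⁻¹ := by norm_num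
            _ ≤ (Real.exp 1)⁻¹ := inv_anti₀ (Real.exp_pos 1) h12
            _ = Real.exp (-1) := (Real.exp_neg 1).symm
        calc (1/3:ℝ)^m ≤ (Real.exp (-1))^m := pow_le_pow_left₀ (by norm_num) h8 m
          _ = Real.exp (-(m:ℝ)) := by
              rw [← Real.exp_nat_mul]
              norm_num
      have e8 : Real.exp (-(m:ℝ)) ≤ Real.exp (- E δ) :=
        Real.exp_le_exp.mpr (by linarith only [hmE])
      linarith only [e6, e7, e8]
    calc (SKG.skg P t) Bad
        ≤ ∑ F ∈ ET.powersetCard m, (SKG.skg P t)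
            (Set.univ.pi (fun e => if e ∈ F then ({true}:Set Bool) else Set.univ)) :=
          le_trans (measure_mono hBadSub) (measure_biUnion_finset_le _ _)
      _ = ∑ F ∈ ET.powersetCard m, ENNReal.ofReal (∏ e ∈ F, q e) :=
          Finset.sum_congr rfl (fun F _ => hcyl F)
      _ = ENNReal.ofReal (∑ F ∈ ET.powersetCard m, ∏ e ∈ F, q e) :=
          (ENNReal.ofReal_sum_of_nonneg (fun F _ =>
            Finset.prod_nonneg (fun e _ => hq0 e))).symm
      _ ≤ ENNReal.ofReal (Real.exp (- E δ)) := ENNReal.ofReal_le_ofReal hreal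
  -- on the complement of Bad, almost all vertices are isolated
  have hGoodSub : Badᶜ ⊆ {ω : Sym2 (Fin t → Fin k) → Bool |
      (k : ℝ) ^ t - 3 * ((k : ℝ) ^ t) ^ δ ≤
        (Set.ncard {v : Fin t → Fin k | ∀ u, ¬ (SKG.graphOf ω).Adj v u} : ℝ)} := by
    intro ω hω
    rw [Set.mem_compl_iff, hBadDef, Set.mem_setOf_eq, not_le] at hω
    set D := ET.filter (fun e => ω e = true) with hDdef
    set N := Finset.univ.filter
      (fun v : Fin t → Fin k => ¬ ∀ u, ¬ (SKG.graphOf ω).Adj v u) with hNdef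
    have hNsub : N ⊆ Tc ∪ D.biUnion (fun e => Finset.univ.filter (· ∈ e)) := by
      intro v hv
      rw [hNdef, Finset.mem_filter] at hv
      obtain ⟨u, hAdj⟩ := not_forall.mp hv.2
      rw [not_not] at hAdj
      obtain ⟨hvu, hωe⟩ := hAdj
      by_cases hvT : w v ≤ θ
      · apply Finset.mem_union_right
        apply Finset.mem_biUnion.mpr
        refine ⟨s(v,u), ?_, ?_⟩
        · rw [hDdef, Finset.mem_filter]
          refine ⟨?_, hωe⟩
          rw [hETdef, Finset.mem_filter]
          refine ⟨Finset.mem_univ _, ?_, ⟨v, ?_, Sym2.mem_mk_left _ _⟩⟩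
          · rw [Sym2.mk_isDiag_iff]
            exact hvu
          · rw [hTdef, Finset.mem_filter]
            exact ⟨Finset.mem_univ _, hvT⟩
        · rw [Finset.mem_filter]
          exact ⟨Finset.mem_univ _, Sym2.mem_mk_left _ _⟩
      · apply Finset.mem_union_left
        rw [hTcdef, Finset.mem_filter]
        exact ⟨Finset.mem_univ _, hvT⟩
    have hends : ∀ e : Sym2 (Fin t → Fin k), (Finset.univ.filter (· ∈ e)).card ≤ 2 := by
      intro e
      induction e using Sym2.ind with
      | _ a b =>
        have hsub2 : Finset.univ.filter (· ∈ s(a,b)) ⊆ {a, b} := by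
          intro x hx
          rw [Finset.mem_filter, Sym2.mem_iff] at hx
          rcases hx.2 with h | h <;> simp [h]
        calc (Finset.univ.filter (· ∈ s(a,b))).card ≤ ({a,b} : Finset _).card :=
              Finset.card_le_card hsub2
          _ ≤ 2 := by
              apply le_trans (Finset.card_insert_le _ _)
              simp
    have hNcardNat : N.card ≤ Tc.card + 2 * D.card := by
      calc N.card ≤ (Tc ∪ D.biUnion (fun e => Finset.univ.filter (· ∈ e))).card :=
            Finset.card_le_card hNsub
        _ ≤ Tc.card + (D.biUnion (fun e => Finset.univ.filter (· ∈ e))).card :=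
            Finset.card_union_le _ _
        _ ≤ Tc.card + ∑ e ∈ D, (Finset.univ.filter (· ∈ e)).card :=
            Nat.add_le_add_left Finset.card_biUnion_le _
        _ ≤ Tc.card + ∑ _e ∈ D, 2 :=
            Nat.add_le_add_left (Finset.sum_le_sum (fun e _ => hends e)) _
        _ = Tc.card + 2 * D.card := by
            rw [Finset.sum_const, smul_eq_mul]
            ring
    have hDcard : (D.card : ℝ) ≤ E δ := by
      have h1 : D.card + 1 ≤ m := hω
      have h2 : ((D.card : ℝ)) + 1 ≤ (m:ℝ) := by exact_mod_cast h1
      linarith only [h2, hmE2]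
    have hNcard : (N.card : ℝ) ≤ 3 * E δ := by
      have h1 : (N.card : ℝ) ≤ (Tc.card : ℝ) + 2 * (D.card : ℝ) := by
        exact_mod_cast hNcardNat
      have h2 : E δ1 ≤ E δ := hEmono hδa.le
      linarith only [h1, h2, hTc_card, hDcard]
    rw [Set.mem_setOf_eq]
    have hisoc : {v : Fin t → Fin k | ∀ u, ¬ (SKG.graphOf ω).Adj v u}.ncard
        = (Finset.univ.filter (fun v : Fin t → Fin k =>
            ∀ u, ¬ (SKG.graphOf ω).Adj v u)).card := by
      rw [Set.ncard_eq_toFinset_card', Set.toFinset_setOf]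
    have hpart : (Finset.univ.filter (fun v : Fin t → Fin k =>
        ∀ u, ¬ (SKG.graphOf ω).Adj v u)).card + N.card = k ^ t := by
      rw [hNdef, Finset.card_filter_add_card_filter_not, Finset.card_univ,
        Fintype.card_fun, Fintype.card_fin, Fintype.card_fin]
    have hcast : ((Finset.univ.filter (fun v : Fin t → Fin k =>
        ∀ u, ¬ (SKG.graphOf ω).Adj v u)).card : ℝ) = (k:ℝ)^t - (N.card : ℝ) := by
      have h3 : ((Finset.univ.filter (fun v : Fin t → Fin k =>
          ∀ u, ¬ (SKG.graphOf ω).Adj v u)).card : ℝ) + (N.card : ℝ) = ((k^t : ℕ) : ℝ) := by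
        exact_mod_cast hpart
      push_cast at h3
      linarith only [h3]
    rw [hisoc, hcast, hkpow δ]
    linarith only [hNcard]
  -- conclusion
  calc ENNReal.ofReal (1 - 3 * Real.exp (-1 * ((k:ℝ)^t)^δ))
      = 1 - ENNReal.ofReal (3 * Real.exp (-1 * ((k:ℝ)^t)^δ)) := by
        rw [ENNReal.ofReal_sub 1 (by positivity), ENNReal.ofReal_one]
    _ ≤ 1 - (SKG.skg P t) Bad := by
        apply tsub_le_tsub_left
        refine le_trans hBad1 (ENNReal.ofReal_le_ofReal ?_)
        rw [hkpow δ]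
        have h1 := (Real.exp_pos (- E δ)).le
        have h2 : (-1 : ℝ) * E δ = - E δ := by ring
        rw [h2]
        linarith only [h1]
    _ = (SKG.skg P t) Badᶜ := (prob_compl_eq_one_sub hBadMeas).symm
    _ ≤ _ := measure_mono hGoodSub
end
end
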